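/- arXiv:1212.6742 — 8 statements merged into one kernel-verified Lean document; each statement's English description precedes it below -/
import Mathlib

section
/- Every Rauzy class of irreducible pairs contains a standard pair; i.e., for every irreducible pair p there is a finite sequence of Rauzy moves (of types 0 and 1) connecting p to a standard pair. -/
/-- A "pair" on a finite alphabet `A`: two bijections (rows) from `A`
to positions `Fin (card A)` (position `i` represents the value `i+1`). -/
structure RPair (A : Type*) [Fintype A] where
  p : Fin 2 → A ≃ Fin (Fintype.card A)

variable {A : Type*} [Fintype A]

/-- The Rauzy move of type `ε`, as a relation: `Q = ε • P`. Row `ε` is fixed;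
in row `1-ε` the last entry is cycled to just after the letter `z` occupying the
last position of row `ε` (0-indexed positions). -/
def Rmove (ε : Fin 2) (P Q : RPair A) : Prop :=
  Q.p ε = P.p ε ∧
  ∀ z : A, ((P.p ε) z).val = Fintype.card A - 1 →
    ∀ b : A, ((Q.p (1 - ε)) b).val =
      if ((P.p (1 - ε)) b).val ≤ ((P.p (1 - ε)) z).val then ((P.p (1 - ε)) b).val
      else if ((P.p (1 - ε)) b).val < Fintype.card A - 1 then ((P.p (1 - ε)) b).val + 1
      else ((P.p (1 - ε)) z).val + 1

/-- A pair is irreducible if its two rows never occupy the first `k` positions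
with the same set of letters, for `0 < k < card A`. -/
def IrreduciblePair (P : RPair A) : Prop :=
  ∀ k : ℕ, 0 < k → k < Fintype.card A →
    {a : A | ((P.p 0) a).val < k} ≠ {a : A | ((P.p 1) a).val < k}

/-- A pair is standard if the first letter of each row is the last letter of the other. -/
def StandardPair (P : RPair A) : Prop :=
  (∀ a : A, ((P.p 0) a).val = 0 → ((P.p 1) a).val = Fintype.card A - 1) ∧
  (∀ z : A, ((P.p 1) z).val = 0 → ((P.p 0) z).val = Fintype.card A - 1)

/-- `Q` is reachable from `P` by finitely many Rauzy moves. -/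
def InRauzyClass (P Q : RPair A) : Prop :=
  Relation.ReflTransGen (fun X Y : RPair A => ∃ ε, Rmove ε X Y) P Q

/-!
The first letter `a` of row 0 never moves. Take a pair `Q₀` in the class where `a` sits as far
right as possible in row 1. If `a` is last in row 1, moves of type 1 push the first letter of
row 1 to the end of row 0, and the pair becomes standard. Otherwise `a` is *blocked* at `Q₀`:
throughout the class it keeps its place in row 0 and never reaches the end of row 1.

A blocked letter `e`, at position `K` of row 1, keeps every pivot of type 0 beyond `K`:
otherwise moves of type 0 would push `e` to the end of row 1. Hence the first `K + 1` letters
of row 1 never move, and none of them can lie beyond a pivot of type 1, since moves of type 1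
would then make it the last letter of row 0, a pivot of type 0 at most `K`. Irreducibility
provides one of them beyond position `K` of row 0, so pivots of type 1 stay beyond `K` as well.
It also provides a letter among the first `K + 1` of row 0 but not of row 1; that letter is
therefore blocked, and sits further right than `e` in row 1. By finiteness, an irreducible pair
has no blocked letter.
-/

theorem Equiv.preimage_eq_of_preimage_subset {α β : Type*} [Finite α] (e₀ e₁ : α ≃ β)
    {s : Set β} (h : e₀ ⁻¹' s ⊆ e₁ ⁻¹' s) : e₀ ⁻¹' s = e₁ ⁻¹' s :=
  Set.eq_of_subset_of_ncard_le h <| by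
    rw [Set.ncard_preimage_of_injective_subset_range e₀.injective (by simp),
      Set.ncard_preimage_of_injective_subset_range e₁.injective (by simp)]

theorem Equiv.exists_mem_not_mem_of_preimage_ne {α β : Type*} [Finite α] (e₀ e₁ : α ≃ β)
    {s : Set β} (h : e₀ ⁻¹' s ≠ e₁ ⁻¹' s) : ∃ a, e₀ a ∈ s ∧ e₁ a ∉ s := by
  by_contra! hs
  exact h (e₀.preimage_eq_of_preimage_subset e₁ hs)

theorem fin_two_eq_or_eq_one_sub (i ε : Fin 2) : i = ε ∨ i = 1 - ε := by
  revert i ε; decide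

namespace RPair

theorem ext {P Q : RPair A} (h : P.p = Q.p) : P = Q := by
  cases P; cases Q; cases h; rfl

instance : Finite (RPair A) :=
  Finite.of_injective RPair.p fun _ _ => RPair.ext

theorem p_val_inj {P : RPair A} {i : Fin 2} {c c' : A} :
    (P.p i c).val = (P.p i c').val ↔ c = c' := by
  rw [Fin.val_inj, EquivLike.apply_eq_iff_eq]

def rauzyShift (n m v : ℕ) : ℕ :=
  if v ≤ m then v else if v < n - 1 then v + 1 else m + 1

theorem rauzyShift_of_le {n m v : ℕ} (h : v ≤ m) : rauzyShift n m v = v := if_pos h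

noncomputable def shiftPerm {n : ℕ} (m : Fin n) : Equiv.Perm (Fin n) :=
  Equiv.ofBijective
    (fun i => ⟨rauzyShift n m i, by
      have := m.isLt; have := i.isLt; unfold rauzyShift; split_ifs <;> omega⟩)
    (Finite.injective_iff_bijective.mp fun i j h => by
      have hij := congrArg Fin.val h
      have := m.isLt; have := i.isLt; have := j.isLt
      simp only [rauzyShift] at hij
      split_ifs at hij <;> omega)

variable [Nonempty A]

def lastPos : Fin (Fintype.card A) :=
  ⟨Fintype.card A - 1, Nat.sub_lt Fintype.card_pos one_pos⟩

def lastLetter (P : RPair A) (ε : Fin 2) : A := (P.p ε).symm lastPos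

/-- The position, in row `1 - ε`, of the last letter of row `ε`: the Rauzy move of type `ε`
reinserts the last letter of row `1 - ε` just after it. -/
def pivot (P : RPair A) (ε : Fin 2) : ℕ := (P.p (1 - ε) (P.lastLetter ε)).val

theorem p_lastLetter (P : RPair A) (ε : Fin 2) :
    (P.p ε (P.lastLetter ε)).val = Fintype.card A - 1 := by
  simp [lastLetter, lastPos]

theorem lastLetter_eq {P : RPair A} {ε : Fin 2} {c : A}
    (h : (P.p ε c).val = Fintype.card A - 1) : P.lastLetter ε = c :=
  p_val_inj.mp ((P.p_lastLetter ε).trans h.symm)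

theorem pivot_zero (P : RPair A) : P.pivot 0 = (P.p 1 (P.lastLetter 0)).val := rfl

theorem pivot_one (P : RPair A) : P.pivot 1 = (P.p 0 (P.lastLetter 1)).val := rfl

theorem pivot_lt (P : RPair A) (ε : Fin 2) : P.pivot ε < Fintype.card A := Fin.isLt _

noncomputable def rauzyMove (ε : Fin 2) (P : RPair A) : RPair A :=
  ⟨fun i => if i = ε then P.p ε
    else (P.p (1 - ε)).trans (shiftPerm (P.p (1 - ε) (P.lastLetter ε)))⟩

theorem rauzyMove_p_self (ε : Fin 2) (P : RPair A) : (rauzyMove ε P).p ε = P.p ε := by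
  simp [rauzyMove]

theorem rauzyMove_p_one_sub_val (ε : Fin 2) (P : RPair A) (b : A) :
    ((rauzyMove ε P).p (1 - ε) b).val =
      rauzyShift (Fintype.card A) (P.pivot ε) (P.p (1 - ε) b).val := by
  have : 1 - ε ≠ ε := by revert ε; decide
  simp [rauzyMove, this, shiftPerm, pivot]

theorem rauzyMove_zero_p_one_val (P : RPair A) (b : A) :
    ((rauzyMove 0 P).p 1 b).val = rauzyShift (Fintype.card A) (P.pivot 0) (P.p 1 b).val :=
  rauzyMove_p_one_sub_val 0 P b

theorem rauzyMove_one_p_zero_val (P : RPair A) (b : A) :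
    ((rauzyMove 1 P).p 0 b).val = rauzyShift (Fintype.card A) (P.pivot 1) (P.p 0 b).val :=
  rauzyMove_p_one_sub_val 1 P b

theorem rmove_rauzyMove (ε : Fin 2) (P : RPair A) : Rmove ε P (rauzyMove ε P) := by
  refine ⟨rauzyMove_p_self ε P, fun z hz b => ?_⟩
  rw [rauzyMove_p_one_sub_val, pivot, lastLetter_eq hz]
  rfl

theorem Rmove.eq_rauzyMove {ε : Fin 2} {P Q : RPair A} (h : Rmove ε P Q) :
    Q = rauzyMove ε P := by
  refine RPair.ext (funext fun i => ?_)
  obtain rfl | rfl := fin_two_eq_or_eq_one_sub i ε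
  · rw [h.1, rauzyMove_p_self]
  · refine Equiv.ext fun b => Fin.ext ?_
    rw [h.2 _ (P.p_lastLetter ε), rauzyMove_p_one_sub_val]
    rfl

theorem rauzyMove_p_one_sub_lastLetter (ε : Fin 2) (P : RPair A) :
    ((rauzyMove ε P).p (1 - ε) (P.lastLetter ε)).val = P.pivot ε := by
  rw [rauzyMove_p_one_sub_val]
  exact rauzyShift_of_le le_rfl

theorem pivot_rauzyMove_self (ε : Fin 2) (P : RPair A) :
    (rauzyMove ε P).pivot ε = P.pivot ε := by
  have hlast : (rauzyMove ε P).lastLetter ε = P.lastLetter ε := by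
    simp only [lastLetter, rauzyMove_p_self]
  rw [pivot, hlast, rauzyMove_p_one_sub_lastLetter]

end RPair

open RPair

theorem inRauzyClass_rauzyMove [Nonempty A] (ε : Fin 2) (P : RPair A) :
    InRauzyClass P (rauzyMove ε P) :=
  .single ⟨ε, rmove_rauzyMove ε P⟩

theorem inRauzyClass_induction [Nonempty A] {Q₀ : RPair A} {Inv : RPair A → Prop} (h₀ : Inv Q₀)
    (step : ∀ Y, InRauzyClass Q₀ Y → Inv Y → ∀ ε, Inv (rauzyMove ε Y)) :
    ∀ Y, InRauzyClass Q₀ Y → Inv Y := by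
  intro Y hY
  induction hY with
  | refl => exact h₀
  | tail hY hmove ih =>
    obtain ⟨ε, hε⟩ := hmove
    rw [hε.eq_rauzyMove]
    exact step _ hY ih ε

section

variable [Nonempty A]

theorem exists_inRauzyClass_p_one_sub_eq_last_of_pivot_lt (ε : Fin 2) (P : RPair A) (c : A)
    (hc : P.pivot ε < (P.p (1 - ε) c).val) :
    ∃ Q, InRauzyClass P Q ∧ Q.p ε = P.p ε ∧ (Q.p (1 - ε) c).val = Fintype.card A - 1 := by
  by_cases hlast : (P.p (1 - ε) c).val = Fintype.card A - 1
  · exact ⟨P, .refl, rfl, hlast⟩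
  have hc_lt := (P.p (1 - ε) c).isLt
  have hstep : ((rauzyMove ε P).p (1 - ε) c).val = (P.p (1 - ε) c).val + 1 := by
    rw [rauzyMove_p_one_sub_val, rauzyShift, if_neg hc.not_ge, if_pos (by omega)]
  obtain ⟨Q, hQ, hQε, hQc⟩ := exists_inRauzyClass_p_one_sub_eq_last_of_pivot_lt ε
    (rauzyMove ε P) c (by rw [pivot_rauzyMove_self, hstep]; omega)
  exact ⟨Q, (inRauzyClass_rauzyMove ε P).trans hQ, hQε.trans (rauzyMove_p_self ε P), hQc⟩
termination_by Fintype.card A - 1 - (P.p (1 - ε) c).val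
decreasing_by omega

theorem p_eq_zero_of_inRauzyClass {P : RPair A} {i : Fin 2} {c : A} (hc : (P.p i c).val = 0) :
    ∀ Y, InRauzyClass P Y → (Y.p i c).val = 0 := by
  refine inRauzyClass_induction hc fun Y _ hY ε => ?_
  obtain rfl | rfl := fin_two_eq_or_eq_one_sub i ε
  · rwa [rauzyMove_p_self]
  · rw [rauzyMove_p_one_sub_val, hY, rauzyShift_of_le (Nat.zero_le _)]

theorem irreduciblePair_rauzyMove {P : RPair A} (hP : IrreduciblePair P) (ε : Fin 2) :
    IrreduciblePair (rauzyMove ε P) := by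
  intro k hk0 hkn hsets
  by_cases hk : k ≤ P.pivot ε
  · have hrows : ∀ i, {a | ((rauzyMove ε P).p i a).val < k} = {a | (P.p i a).val < k} := by
      intro i
      ext a
      obtain rfl | rfl := fin_two_eq_or_eq_one_sub i ε
      · rw [Set.mem_ofPred_eq, rauzyMove_p_self]; rfl
      · simp only [Set.mem_ofPred_eq, rauzyMove_p_one_sub_val, rauzyShift]
        split_ifs <;> omega
    exact hP k hk0 hkn (by rwa [hrows 0, hrows 1] at hsets)
  · -- the last letter of row `ε` now lies among the first `k` letters of row `1 - ε` only
    set z := P.lastLetter ε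
    have hz : ((rauzyMove ε P).p (1 - ε) z).val < k := by
      rw [rauzyMove_p_one_sub_lastLetter]; exact lt_of_not_ge hk
    have hz' : ¬ ((rauzyMove ε P).p ε z).val < k := by
      rw [rauzyMove_p_self, p_lastLetter]; omega
    have hmem := Set.ext_iff.mp hsets z
    simp only [Set.mem_ofPred_eq] at hmem
    fin_cases ε
    · exact hz' (hmem.mpr hz)
    · exact hz' (hmem.mp hz)

theorem IrreduciblePair.of_inRauzyClass {P : RPair A} (hP : IrreduciblePair P) :
    ∀ Y, InRauzyClass P Y → IrreduciblePair Y :=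
  inRauzyClass_induction hP fun _ _ hY ε => irreduciblePair_rauzyMove hY ε

end

def Blocked (Q₀ : RPair A) (e : A) : Prop :=
  (Q₀.p 0 e).val < Fintype.card A - 1 ∧
    ∀ Y, InRauzyClass Q₀ Y → Y.p 0 e = Q₀.p 0 e ∧ (Y.p 1 e).val ≠ Fintype.card A - 1

namespace Blocked

variable {Q Q₀ Y : RPair A} {e c : A}

theorem of_inRauzyClass (he : Blocked Q₀ e) (hY : InRauzyClass Q₀ Y) : Blocked Y e := by
  obtain ⟨hlt, hfix⟩ := he
  refine ⟨(hfix Y hY).1 ▸ hlt, fun Z hZ => ?_⟩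
  obtain ⟨hZ0, hZ1⟩ := hfix Z (hY.trans hZ)
  exact ⟨hZ0.trans (hfix Y hY).1.symm, hZ1⟩

variable [Nonempty A]

theorem p_one_lt_pivot_zero (he : Blocked Q e) : (Q.p 1 e).val < Q.pivot 0 := by
  have hne : Q.lastLetter 0 ≠ e := fun h => he.1.ne (h ▸ Q.p_lastLetter 0)
  refine lt_of_le_of_ne (not_lt.mp fun hlt => ?_) (fun h => hne (p_val_inj.mp h.symm))
  obtain ⟨Q', hQ', -, hlast⟩ := exists_inRauzyClass_p_one_sub_eq_last_of_pivot_lt 0 Q e hlt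
  exact (he.2 Q' hQ').2 hlast

theorem p_zero_le_pivot_one (he : Blocked Q e) (hc : (Q.p 1 c).val ≤ (Q.p 1 e).val) :
    (Q.p 0 c).val ≤ Q.pivot 1 := by
  by_contra! hlt
  obtain ⟨Q', hQ', hrow, hlast⟩ : ∃ Q', InRauzyClass Q Q' ∧ Q'.p 1 = Q.p 1 ∧
      (Q'.p 0 c).val = Fintype.card A - 1 :=
    exists_inRauzyClass_p_one_sub_eq_last_of_pivot_lt 1 Q c hlt
  have := (he.of_inRauzyClass hQ').p_one_lt_pivot_zero
  rw [pivot_zero, lastLetter_eq hlast, hrow] at this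
  omega

theorem p_one_eq (he : Blocked Q₀ e) : ∀ Y, InRauzyClass Q₀ Y → Y.p 1 e = Q₀.p 1 e := by
  refine inRauzyClass_induction rfl fun Y hY hYe => Fin.forall_fin_two.mpr ⟨?_, ?_⟩
  · refine Fin.ext ?_
    rw [rauzyMove_zero_p_one_val,
      rauzyShift_of_le (he.of_inRauzyClass hY).p_one_lt_pivot_zero.le, hYe]
  · rwa [rauzyMove_p_self]

theorem p_eq_of_p_one_le (he : Blocked Q₀ e) (hc : (Q₀.p 1 c).val ≤ (Q₀.p 1 e).val) :
    ∀ Y, InRauzyClass Q₀ Y → Y.p 0 c = Q₀.p 0 c ∧ Y.p 1 c = Q₀.p 1 c := by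
  refine inRauzyClass_induction ⟨rfl, rfl⟩ fun Y hY ⟨hY0, hY1⟩ => ?_
  have hYc : (Y.p 1 c).val ≤ (Y.p 1 e).val := by rw [hY1, he.p_one_eq Y hY]; exact hc
  have hYe := he.of_inRauzyClass hY
  refine Fin.forall_fin_two.mpr ⟨?_, ?_⟩
  · refine ⟨by rwa [rauzyMove_p_self], Fin.ext ?_⟩
    rw [rauzyMove_zero_p_one_val, rauzyShift_of_le (hYc.trans hYe.p_one_lt_pivot_zero.le), hY1]
  · refine ⟨Fin.ext ?_, by rwa [rauzyMove_p_self]⟩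
    rw [rauzyMove_one_p_zero_val, rauzyShift_of_le (hYe.p_zero_le_pivot_one hYc), hY0]

end Blocked

theorem blocked_of_forall_lt_pivot_one [Nonempty A] {Q₀ : RPair A} {c : A}
    (h : ∀ Y, InRauzyClass Q₀ Y → (Q₀.p 0 c).val < Y.pivot 1) : Blocked Q₀ c := by
  have hfix : ∀ Y, InRauzyClass Q₀ Y → Y.p 0 c = Q₀.p 0 c := by
    refine inRauzyClass_induction rfl fun Y hY hYc => Fin.forall_fin_two.mpr ⟨?_, ?_⟩
    · rwa [rauzyMove_p_self]
    · refine Fin.ext ?_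
      rw [rauzyMove_one_p_zero_val, hYc, rauzyShift_of_le (h Y hY).le]
  refine ⟨?_, fun Y hY => ⟨hfix Y hY, fun hlast => ?_⟩⟩
  · have := h Q₀ .refl
    have := Q₀.pivot_lt 1
    omega
  · have := h Y hY
    rw [pivot_one, lastLetter_eq hlast, hfix Y hY] at this
    exact lt_irrefl _ this

theorem Blocked.exists_blocked_p_one_lt [Nonempty A] {Q₀ : RPair A} {e : A} (he : Blocked Q₀ e)
    (hQ₀ : IrreduciblePair Q₀) : ∃ e', Blocked Q₀ e' ∧ (Q₀.p 1 e).val < (Q₀.p 1 e').val := by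
  set K := (Q₀.p 1 e).val
  have hK : K + 1 < Fintype.card A := by
    have := (he.2 Q₀ .refl).2
    have := (Q₀.p 1 e).isLt
    omega
  have hsets := hQ₀ (K + 1) K.succ_pos hK
  obtain ⟨c, hc1, hc0⟩ := Equiv.exists_mem_not_mem_of_preimage_ne (Q₀.p 1) (Q₀.p 0)
    (s := {i | i.val < K + 1}) hsets.symm
  obtain ⟨e', he'0, he'1⟩ := Equiv.exists_mem_not_mem_of_preimage_ne (Q₀.p 0) (Q₀.p 1)
    (s := {i | i.val < K + 1}) hsets
  simp only [Set.mem_ofPred_eq, not_lt] at hc1 hc0 he'0 he'1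
  refine ⟨e', blocked_of_forall_lt_pivot_one fun Y hY => ?_, by omega⟩
  obtain ⟨hY0, hY1⟩ := he.p_eq_of_p_one_le (Nat.lt_succ_iff.mp hc1) Y hY
  have := (he.of_inRauzyClass hY).p_zero_le_pivot_one (c := c)
    (by rw [hY1, he.p_one_eq Y hY]; omega)
  rw [hY0] at this
  omega

theorem IrreduciblePair.not_blocked [Nonempty A] {Q₀ : RPair A} (hQ₀ : IrreduciblePair Q₀)
    (e : A) : ¬ Blocked Q₀ e := by
  classical
  intro he
  obtain ⟨e', he', hmax⟩ := (Finset.univ.filter (Blocked Q₀)).exists_max_image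
    (fun c => (Q₀.p 1 c).val) ⟨e, by simpa using he⟩
  obtain ⟨e'', he'', hlt⟩ := (Finset.mem_filter.mp he').2.exists_blocked_p_one_lt hQ₀
  exact (hmax e'' (by simpa using he'')).not_gt hlt

theorem exists_standardPair_of_p_zero_eq_zero_of_p_one_eq_last [Nonempty A]
    (hA : 2 ≤ Fintype.card A) {Q : RPair A} {a : A} (ha0 : (Q.p 0 a).val = 0)
    (ha1 : (Q.p 1 a).val = Fintype.card A - 1) : ∃ Q', InRauzyClass Q Q' ∧ StandardPair Q' := by
  set b := (Q.p 1).symm ⟨0, by omega⟩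
  have hb1 : (Q.p 1 b).val = 0 := by simp [b]
  have hb0 : Q.pivot 1 < (Q.p 0 b).val := by
    rw [pivot_one, lastLetter_eq ha1, ha0]
    refine Nat.pos_of_ne_zero fun h => ?_
    rw [p_val_inj.mp (h.trans ha0.symm)] at hb1
    omega
  obtain ⟨Q', hQ', hrow, hlast⟩ : ∃ Q', InRauzyClass Q Q' ∧ Q'.p 1 = Q.p 1 ∧
      (Q'.p 0 b).val = Fintype.card A - 1 :=
    exists_inRauzyClass_p_one_sub_eq_last_of_pivot_lt 1 Q b hb0
  refine ⟨Q', hQ', fun c hc => ?_, fun c hc => ?_⟩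
  · rw [p_val_inj.mp (hc.trans (p_eq_zero_of_inRauzyClass ha0 Q' hQ').symm), hrow, ha1]
  · rw [hrow] at hc
    rw [p_val_inj.mp (hc.trans hb1.symm), hlast]

/-- Every Rauzy class contains a standard pair. -/
theorem every_rauzy_class_contains_standard_pair
    {A : Type*} [Fintype A] (hA : 2 ≤ Fintype.card A)
    (P : RPair A) (hP : IrreduciblePair P) :
    ∃ Q : RPair A, InRauzyClass P Q ∧ StandardPair Q := by
  have : Nonempty A := Fintype.card_pos_iff.mp (by omega)
  set a := (P.p 0).symm ⟨0, by omega⟩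
  have ha : ∀ Y, InRauzyClass P Y → (Y.p 0 a).val = 0 :=
    p_eq_zero_of_inRauzyClass (by simp [a])
  have : Nonempty {Q // InRauzyClass P Q} := ⟨⟨P, .refl⟩⟩
  obtain ⟨⟨Q₀, hQ₀⟩, hmax⟩ := Finite.exists_max fun Q : {Q // InRauzyClass P Q} => (Q.1.p 1 a).val
  have hlast : (Q₀.p 1 a).val = Fintype.card A - 1 := by
    by_contra hne
    refine (hP.of_inRauzyClass Q₀ hQ₀).not_blocked a
      ⟨by rw [ha Q₀ hQ₀]; omega, fun Y hY => ⟨Fin.ext ?_, fun hY1 => ?_⟩⟩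
    · rw [ha Y (hQ₀.trans hY), ha Q₀ hQ₀]
    · have hle : (Y.p 1 a).val ≤ (Q₀.p 1 a).val := hmax ⟨Y, hQ₀.trans hY⟩
      have := (Q₀.p 1 a).isLt
      omega
  obtain ⟨Q, hQ, hstd⟩ :=
    exists_standardPair_of_p_zero_eq_zero_of_p_one_eq_last hA (ha Q₀ hQ₀) hlast
  exact ⟨Q, hQ₀.trans hQ, hstd⟩
end

section
/- Each Rauzy move of type ε ∈ {0,1} maps irreducible pairs to irreducible pairs, and for every irreducible pair p and ε ∈ {0,1} there exists k > 0 with ε^k p = p (i.e., the Rauzy move of type ε is a bijection of finite order on its orbit within irreducible pairs). -/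
variable {A : Type*} [Fintype A]

/-- `k`-fold iteration of the type-`ε` Rauzy move, as a relation. -/
def RmoveIter {A : Type*} [Fintype A] (ε : Fin 2) : ℕ → RPair A → RPair A → Prop
  | 0 => fun P Q => Q = P
  | (k + 1) => fun P Q => ∃ R, Rmove ε P R ∧ RmoveIter ε k R Q

/-!
Irreducibility survives a move of type `ε` because row `ε` is unchanged and row `1 - ε` only
changes after the position `m` of the letter `z` that ends row `ε`: an initial segment of length
`k ≤ m + 1` is the same in both rows before and after the move, while for `k > m + 1` the letter
`z` lies in the initial segment of row `1 - ε` but not of row `ε`. The move is total and its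
graph is left-unique, so it is an injective self-map of the finite set of pairs, and every point
of such a map is periodic.
-/

/-- The new position, after a move, of the entry at position `i` of row `1 - ε`, where `m` is
the position of the letter ending row `ε` and `n = #A`: the tail `m + 1, …, n - 1` is cycled. -/
def tailCycle (n m i : ℕ) : ℕ :=
  if i ≤ m then i else if i < n - 1 then i + 1 else m + 1

section tailCycle

variable {n m i j k : ℕ}

lemma tailCycle_self : tailCycle n m m = m := if_pos le_rfl

lemma tailCycle_lt (hi : i < n) : tailCycle n m i < n := by
  unfold tailCycle; split_ifs <;> omega

lemma eq_of_tailCycle_eq (hi : i < n) (hj : j < n) (h : tailCycle n m i = tailCycle n m j) :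
    i = j := by
  unfold tailCycle at h; split_ifs at h <;> omega

lemma tailCycle_lt_iff (hk : k ≤ m + 1) : tailCycle n m i < k ↔ i < k := by
  unfold tailCycle; split_ifs <;> omega

end tailCycle

noncomputable def tailCyclePerm (n m : ℕ) : Equiv.Perm (Fin n) :=
  Equiv.ofBijective (fun i => ⟨tailCycle n m i, tailCycle_lt i.isLt⟩) <|
    Finite.injective_iff_bijective.mp fun i j h =>
      Fin.ext (eq_of_tailCycle_eq i.isLt j.isLt (Fin.val_eq_of_eq h))

lemma RPair.ext_of_rows {P Q : RPair A} (ε : Fin 2) (h : P.p ε = Q.p ε)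
    (h' : P.p (1 - ε) = Q.p (1 - ε)) : P = Q := by
  obtain ⟨p⟩ := P
  obtain ⟨q⟩ := Q
  congr
  funext i
  fin_cases i <;> fin_cases ε <;> assumption

instance : Finite (RPair A) :=
  Finite.of_injective RPair.p fun P Q h => by cases P; cases Q; congr

lemma RPair.exists_eq_last [Nonempty A] (P : RPair A) (ε : Fin 2) :
    ∃ z, ((P.p ε) z).val = Fintype.card A - 1 :=
  ⟨(P.p ε).symm ⟨_, Nat.sub_one_lt Fintype.card_ne_zero⟩, by simp⟩

lemma irreduciblePair_iff (P : RPair A) (ε : Fin 2) :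
    IrreduciblePair P ↔ ∀ k : ℕ, 0 < k → k < Fintype.card A →
      {a : A | ((P.p ε) a).val < k} ≠ {a : A | ((P.p (1 - ε)) a).val < k} := by
  fin_cases ε
  · rfl
  · simp only [IrreduciblePair]
    exact forall₃_congr fun _ _ _ => ne_comm

lemma Rmove.apply_other {ε : Fin 2} {P Q : RPair A} (h : Rmove ε P Q) {z : A}
    (hz : ((P.p ε) z).val = Fintype.card A - 1) (b : A) :
    ((Q.p (1 - ε)) b).val =
      tailCycle (Fintype.card A) ((P.p (1 - ε)) z) ((P.p (1 - ε)) b) :=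
  h.2 z hz b

lemma exists_rmove (ε : Fin 2) (P : RPair A) : ∃ Q, Rmove ε P Q := by
  cases isEmpty_or_nonempty A
  · exact ⟨P, rfl, fun z => isEmptyElim z⟩
  obtain ⟨z, hz⟩ := P.exists_eq_last ε
  let Q : RPair A := ⟨fun i => if i = ε then P.p ε else
    (P.p (1 - ε)).trans (tailCyclePerm _ ((P.p (1 - ε)) z))⟩
  have hother : (1 - ε) ≠ ε := by fin_cases ε <;> decide
  refine ⟨Q, if_pos rfl, fun z' hz' b => ?_⟩
  obtain rfl : z' = z := (P.p ε).injective (Fin.ext (hz'.trans hz.symm))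
  simp [Q, if_neg hother, tailCyclePerm, tailCycle]

lemma Rmove.left_unique {ε : Fin 2} {P P' Q : RPair A} (h : Rmove ε P Q)
    (h' : Rmove ε P' Q) : P = P' := by
  have hε : P.p ε = P'.p ε := h.1.symm.trans h'.1
  refine RPair.ext_of_rows ε hε (Equiv.ext fun b => Fin.ext ?_)
  have : Nonempty A := ⟨b⟩
  obtain ⟨z, hz⟩ := P.exists_eq_last ε
  have hz' : ((P'.p ε) z).val = Fintype.card A - 1 := hε ▸ hz
  have hm : ((P.p (1 - ε)) z).val = ((P'.p (1 - ε)) z).val := by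
    have := (h.apply_other hz z).symm.trans (h'.apply_other hz' z)
    rwa [tailCycle_self, tailCycle_self] at this
  refine eq_of_tailCycle_eq (Fin.is_lt _) (Fin.is_lt _) ((h.apply_other hz b).symm.trans ?_)
  rw [h'.apply_other hz' b, hm]

lemma IrreduciblePair.of_rmove {ε : Fin 2} {P Q : RPair A} (hP : IrreduciblePair P)
    (h : Rmove ε P Q) : IrreduciblePair Q := by
  rw [irreduciblePair_iff _ ε] at hP ⊢
  intro k hk hkn hEq
  rw [h.1] at hEq
  have : Nonempty A := Fintype.card_pos_iff.mp (by omega)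
  obtain ⟨z, hz⟩ := P.exists_eq_last ε
  by_cases hkm : k ≤ ((P.p (1 - ε)) z).val + 1
  · refine hP k hk hkn (hEq.trans ?_)
    ext b
    simp only [Set.mem_ofPred_eq, h.apply_other hz, tailCycle_lt_iff hkm]
  · have hzQ : z ∈ {a | ((Q.p (1 - ε)) a).val < k} := by
      simp only [Set.mem_ofPred_eq, h.apply_other hz, tailCycle_self]
      omega
    rw [← hEq] at hzQ
    exact absurd hzQ (by simp only [Set.mem_ofPred_eq, hz]; omega)

lemma rmoveIter_iterate {ε : Fin 2} {f : RPair A → RPair A} (hf : ∀ P, Rmove ε P (f P))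
    (k : ℕ) (P : RPair A) : RmoveIter ε k P (f^[k] P) := by
  induction k generalizing P with
  | zero => rfl
  | succ k ih => exact ⟨f P, hf P, ih (f P)⟩

lemma exists_rmoveIter_self (ε : Fin 2) (P : RPair A) :
    ∃ k : ℕ, 0 < k ∧ RmoveIter ε k P P := by
  choose f hf using fun P : RPair A => exists_rmove ε P
  have hinj : Function.Injective f := fun P P' hPP' => (hf P).left_unique (hPP' ▸ hf P')
  obtain ⟨k, hk, hper⟩ := hinj.mem_periodicPts P
  exact ⟨k, hk, by simpa only [hper.eq] using rmoveIter_iterate hf k P⟩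

/-- Each Rauzy move of type `ε` maps irreducible pairs to irreducible pairs
(and is defined on them), and iterating it some `k > 0` times returns to the
starting pair. -/
theorem rauzy_move_preserves_irreducible_and_has_finite_order
    {A : Type*} [Fintype A] (P : RPair A) (hP : IrreduciblePair P) (ε : Fin 2) :
    (∀ Q : RPair A, Rmove ε P Q → IrreduciblePair Q) ∧
    (∃ Q : RPair A, Rmove ε P Q) ∧
    (∃ k : ℕ, 0 < k ∧ RmoveIter ε k P P) :=
  ⟨fun _ hQ => hP.of_rmove hQ, exists_rmove ε P, exists_rmoveIter_self ε P⟩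
end

section
/- For an irreducible pair p = (p0, p1) on A, let q = (p1, p0) be its inverse. Then S(q) = S(p)^{-1}, where S is the permutation of A defined by S(p)(α) = p0^{-1}(1) if p1(α) = 1; S(p)(α) = p0^{-1}(p0(p1^{-1}(#A)) + 1) if p1(α) = p1(p0^{-1}(#A)) + 1; and otherwise S(p)(α) = p0^{-1}(p0(p1^{-1}(p1(α) - 1)) + 1). -/
variable {A : Type*} [Fintype A]

/-- The inverse of a pair `(p0, p1)` is `(p1, p0)`. -/
def RPair.inv {A : Type*} [Fintype A] (P : RPair A) : RPair A :=
  ⟨fun ε => P.p (1 - ε)⟩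

section Smap

variable {A : Type*} [Fintype A] [Nonempty A]

/-- The first position (value `1`). -/
def fin0 (A : Type*) [Fintype A] [Nonempty A] : Fin (Fintype.card A) :=
  ⟨0, Fintype.card_pos⟩

/-- The last position (value `#A`). -/
def finLast (A : Type*) [Fintype A] [Nonempty A] : Fin (Fintype.card A) :=
  ⟨Fintype.card A - 1, Nat.sub_lt Fintype.card_pos Nat.one_pos⟩

/-- Successor position (cyclically, to make it total). -/
def finSucc (i : Fin (Fintype.card A)) : Fin (Fintype.card A) :=
  ⟨(i.val + 1) % Fintype.card A, Nat.mod_lt _ Fintype.card_pos⟩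

/-- Predecessor position (truncated, to make it total). -/
def finPred {n : ℕ} (i : Fin n) : Fin n :=
  ⟨i.val - 1, lt_of_le_of_lt (Nat.sub_le _ _) i.isLt⟩

/-- The map `S(p) : A → A`:
`S(p)(α) = p0⁻¹(1)` if `p1(α) = 1`;
`S(p)(α) = p0⁻¹(p0(p1⁻¹(#A)) + 1)` if `p1(α) = p1(p0⁻¹(#A)) + 1`;
`S(p)(α) = p0⁻¹(p0(p1⁻¹(p1(α) - 1)) + 1)` otherwise. -/
def Smap (P : RPair A) : A → A := fun α =>
  if ((P.p 1) α).val = 0 then (P.p 0).symm (fin0 A)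
  else if ((P.p 1) α).val = ((P.p 1) ((P.p 0).symm (finLast A))).val + 1 then
    (P.p 0).symm (finSucc ((P.p 0) ((P.p 1).symm (finLast A))))
  else
    (P.p 0).symm (finSucc ((P.p 0) ((P.p 1).symm (finPred ((P.p 1) α)))))

end Smap

/-!
Writing `z₀, z₁` for the last letters of the two rows, `β = S(p) α` holds exactly when either
`α` heads row 1 and `β` heads row 0, or `α` follows `z₀` in row 1 and `β` follows `z₁` in
row 0, or some letter `γ` is followed by `α` in row 1 and by `β` in row 0. This description
is symmetric under exchanging the rows together with `α` and `β`, so the graph of `S(q)` is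
the transpose of the graph of `S(p)`. Such a `β` is always unique, and it exists because
irreducibility forces `z₀ ≠ z₁`.
-/

namespace RPair

@[simp] lemma inv_p_zero (P : RPair A) : P.inv.p 0 = P.p 1 := rfl

@[simp] lemma inv_p_one (P : RPair A) : P.inv.p 1 = P.p 0 := rfl

lemma inv_inv (P : RPair A) : P.inv.inv = P := by
  obtain ⟨p⟩ := P
  unfold RPair.inv
  congr 1
  funext ε
  fin_cases ε <;> rfl

end RPair

namespace IrreduciblePair

lemma inv {P : RPair A} (hP : IrreduciblePair P) : IrreduciblePair P.inv :=
  fun k hk hkn h => hP k hk hkn h.symm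

end IrreduciblePair

section

variable [Nonempty A]

lemma val_lt_card_sub_one_iff_ne (e : A ≃ Fin (Fintype.card A)) (a : A) :
    (e a : ℕ) < Fintype.card A - 1 ↔ a ≠ e.symm (finLast A) := by
  rw [Ne, Equiv.eq_symm_apply, Fin.ext_iff]
  simp only [finLast]
  have := (e a).isLt
  omega

namespace IrreduciblePair

lemma last_ne_last {P : RPair A} (hP : IrreduciblePair P) (hA : 1 < Fintype.card A) :
    (P.p 0).symm (finLast A) ≠ (P.p 1).symm (finLast A) := by
  intro h
  refine hP (Fintype.card A - 1) (by omega) (by omega) ?_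
  ext a
  simp only [Set.mem_ofPred_eq, val_lt_card_sub_one_iff_ne, h]

end IrreduciblePair

/-- The three disjuncts are the ways in which the first return of `R_{p0} ∘ L_{p1}` leads from
`α` to `β`: through `◁`, through `▷`, or through a letter `γ = L_{p1} α`. -/
def SmapRel (P : RPair A) (α β : A) : Prop :=
  ((P.p 1 α : ℕ) = 0 ∧ (P.p 0 β : ℕ) = 0) ∨
  ((P.p 1 α : ℕ) = P.p 1 ((P.p 0).symm (finLast A)) + 1 ∧
    (P.p 0 β : ℕ) = P.p 0 ((P.p 1).symm (finLast A)) + 1) ∨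
  ∃ γ, (P.p 1 α : ℕ) = P.p 1 γ + 1 ∧ (P.p 0 β : ℕ) = P.p 0 γ + 1

lemma smapRel_inv_iff (P : RPair A) (α β : A) : SmapRel P.inv β α ↔ SmapRel P α β := by
  simp only [SmapRel, RPair.inv_p_zero, RPair.inv_p_one, and_comm]

lemma finSucc_val_of_lt {i : Fin (Fintype.card A)} (hi : (i : ℕ) < Fintype.card A - 1) :
    (finSucc i : ℕ) = i + 1 :=
  Nat.mod_eq_of_lt (by omega)

lemma symm_eq_of_val_eq_finSucc_val (e : A ≃ Fin (Fintype.card A)) {b : A}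
    {i : Fin (Fintype.card A)} (h : (e b : ℕ) = i + 1) : e.symm (finSucc i) = b := by
  rw [Equiv.symm_apply_eq, Fin.ext_iff, finSucc, h]
  exact Nat.mod_eq_of_lt (h ▸ (e b).isLt)

lemma smap_eq_of_smapRel {P : RPair A} {α β : A} (h : SmapRel P α β) : Smap P α = β := by
  rcases h with ⟨hα, hβ⟩ | ⟨hα, hβ⟩ | ⟨γ, hα, hβ⟩
  · rw [Smap, if_pos hα, Equiv.symm_apply_eq, Fin.ext_iff, hβ, fin0]
  · rw [Smap, if_neg (by omega), if_pos hα]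
    exact symm_eq_of_val_eq_finSucc_val _ hβ
  · have hγ : γ ≠ (P.p 0).symm (finLast A) := by
      rw [← val_lt_card_sub_one_iff_ne]
      have := (P.p 0 β).isLt
      omega
    have hpred : (P.p 1).symm (finPred (P.p 1 α)) = γ := by
      rw [Equiv.symm_apply_eq, Fin.ext_iff]
      simp only [finPred, hα]
      omega
    have hnot_last : (P.p 1 α : ℕ) ≠ P.p 1 ((P.p 0).symm (finLast A)) + 1 := by
      rw [hα, Ne, Nat.succ_inj, ← Fin.ext_iff]
      exact (P.p 1).injective.ne hγ
    rw [Smap, if_neg (by omega), if_neg hnot_last, hpred]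
    exact symm_eq_of_val_eq_finSucc_val _ hβ

lemma smapRel_smap {P : RPair A} (hP : IrreduciblePair P) (α : A) : SmapRel P α (Smap P α) := by
  by_cases h0 : (P.p 1 α : ℕ) = 0
  · left
    simp [Smap, h0, fin0]
  by_cases hlast : (P.p 1 α : ℕ) = P.p 1 ((P.p 0).symm (finLast A)) + 1
  · have hA : 1 < Fintype.card A := by
      have := (P.p 1 α).isLt
      omega
    have hz := (val_lt_card_sub_one_iff_ne (P.p 0) _).2 (hP.last_ne_last hA).symm
    right; left
    simp only [Smap, if_neg h0, if_pos hlast, Equiv.apply_symm_apply]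
    exact ⟨hlast, finSucc_val_of_lt hz⟩
  · set γ := (P.p 1).symm (finPred (P.p 1 α))
    have hγ : (P.p 1 α : ℕ) = P.p 1 γ + 1 := by
      simp only [γ, Equiv.apply_symm_apply, finPred]
      omega
    have hγz : (P.p 0 γ : ℕ) < Fintype.card A - 1 := by
      rw [val_lt_card_sub_one_iff_ne]
      intro hγz
      exact hlast (hγz ▸ hγ)
    right; right
    refine ⟨γ, hγ, ?_⟩
    simp only [Smap, if_neg h0, if_neg hlast, Equiv.apply_symm_apply]
    exact finSucc_val_of_lt hγz

lemma smap_inv_smap {P : RPair A} (hP : IrreduciblePair P) (α : A) :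
    Smap P.inv (Smap P α) = α :=
  smap_eq_of_smapRel ((smapRel_inv_iff P _ _).2 (smapRel_smap hP α))

end

/-- For an irreducible pair `p` with inverse `q = (p1, p0)`, `S(q) = S(p)⁻¹`. -/
theorem Smap_inv
    {A : Type*} [Fintype A] [Nonempty A] (P : RPair A) (hP : IrreduciblePair P) :
    (∀ α : A, Smap P.inv (Smap P α) = α) ∧ (∀ α : A, Smap P (Smap P.inv α) = α) :=
  ⟨smap_inv_smap hP, fun α => by simpa only [RPair.inv_inv] using smap_inv_smap hP.inv α⟩
end

section
/- Let M(p) denote the length of the cycle of the permutation S(p) containing the letter p0^{-1}(1). Then M is a Rauzy class invariant: M(q) = M(p) for every q in the Rauzy class of p. -/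
variable {A : Type*} [Fintype A]

/-- `M(p)`: the length of the cycle of `S(p)` containing `p0⁻¹(1)`. -/
noncomputable def Mval {A : Type*} [Fintype A] [Nonempty A] (P : RPair A) : ℕ :=
  Function.minimalPeriod (Smap P) ((P.p 0).symm (fin0 A))

/-!
Write `σ₀, σ₁` for the two rows, `zᵣ = σᵣ⁻¹(#A)` for their last letters, `ρ` for the cyclic
successor of positions and `c_m` for the permutation of positions with the two cycles
`(1 … m) (m+1 … #A)`. Unwinding the definition of `S(p)` gives
`S(p) ∘ σ₁⁻¹ c_{σ₁ z₀} σ₁ = σ₀⁻¹ ρ σ₀` and `S(p) ∘ σ₁⁻¹ ρ σ₁ = σ₀⁻¹ c_{σ₀ z₁} σ₀`.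
A Rauzy move of type `0` (resp. `1`) replaces `σ₁` by `g ∘ σ₁` (resp. `σ₀` by `g ∘ σ₀`), where
`g` is the cycle `(m+1 … #A)` for `m = σ₁ z₀` (resp. `m = σ₀ z₁`). As `g` fixes `m` and is one of
the two cycles of `c_m`, it commutes with `c_m`; hence both sides of the first (resp. second)
identity, apart from `S`, are the same for `p` and for the moved pair, and so is `S`. Finally `g`
fixes the first position, so `p₀⁻¹(1)` is unchanged too.
-/

namespace Fin

variable {n : ℕ}

/-- `finRotate n * swap m (n - 1)`: the two cycles `(0 1 … m) (m+1 … n-1)`. -/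
def splitRotate (m i : Fin n) : Fin n :=
  ⟨if (i : ℕ) = m then 0 else if (i : ℕ) = n - 1 then (m : ℕ) + 1 else (i : ℕ) + 1, by
    split_ifs <;> omega⟩

/-- The Rauzy move on positions: the new position of the entry at position `i` when the last
entry is moved to just after position `m`. -/
def insertLastAfter (m i : Fin n) : Fin n :=
  ⟨if (i : ℕ) ≤ m then (i : ℕ) else if (i : ℕ) < n - 1 then (i : ℕ) + 1 else (m : ℕ) + 1, by
    split_ifs <;> omega⟩

theorem val_splitRotate (m i : Fin n) : (splitRotate m i : ℕ) =
    if (i : ℕ) = m then 0 else if (i : ℕ) = n - 1 then (m : ℕ) + 1 else (i : ℕ) + 1 := rfl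

theorem val_insertLastAfter (m i : Fin n) : (insertLastAfter m i : ℕ) =
    if (i : ℕ) ≤ m then (i : ℕ) else if (i : ℕ) < n - 1 then (i : ℕ) + 1 else (m : ℕ) + 1 := rfl

theorem splitRotate_injective (m : Fin n) : Function.Injective (splitRotate m) := by
  intro i j h
  rw [Fin.ext_iff, val_splitRotate, val_splitRotate] at h
  ext
  split_ifs at h <;> omega

theorem insertLastAfter_self (m : Fin n) : insertLastAfter m m = m := by
  ext
  simp [val_insertLastAfter]

theorem commute_insertLastAfter_splitRotate (m : Fin n) :
    Function.Commute (insertLastAfter m) (splitRotate m) := by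
  intro i
  ext
  simp only [val_insertLastAfter, val_splitRotate]
  split_ifs <;> omega

end Fin

theorem Equiv.symm_conj_eq_of_commute {α β : Type*} {e e' : α ≃ β} {f g : β → β}
    (he : ∀ a, e' a = g (e a)) (hgf : Function.Commute g f) :
    e'.symm.conj f = e.symm.conj f := by
  funext a
  simp only [conj_apply, symm_symm]
  apply e'.injective
  rw [apply_symm_apply, he, he, apply_symm_apply, hgf]

theorem Equiv.conj_surjective {α β : Type*} (e : α ≃ β) {f : α → α}
    (hf : Function.Surjective f) : Function.Surjective (e.conj f) :=
  e.surjective.comp (hf.comp e.symm.surjective)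

section Smap

variable [Nonempty A]

theorem val_finSucc (i : Fin (Fintype.card A)) :
    (finSucc i : ℕ) = if (i : ℕ) = Fintype.card A - 1 then 0 else (i : ℕ) + 1 := by
  have hi := i.isLt
  unfold finSucc
  split_ifs with h
  · simp only [h, Nat.sub_add_cancel Fintype.card_pos, Nat.mod_self]
  · exact Nat.mod_eq_of_lt (by omega)

theorem val_finLast : (finLast A : ℕ) = Fintype.card A - 1 := rfl

theorem finSucc_finLast : finSucc (finLast A) = fin0 A := by
  ext
  simp [val_finSucc, finLast, fin0]

theorem finSucc_injective : Function.Injective (finSucc (A := A)) := by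
  intro i j h
  rw [Fin.ext_iff, val_finSucc, val_finSucc] at h
  ext
  split_ifs at h <;> omega

theorem Rmove.p_one_apply {P Q : RPair A} (h : Rmove 0 P Q) (b : A) :
    Q.p 1 b = Fin.insertLastAfter (P.p 1 ((P.p 0).symm (finLast A))) (P.p 1 b) :=
  Fin.ext (h.2 _ (by simp [finLast]) b)

theorem Rmove.p_zero_apply {P Q : RPair A} (h : Rmove 1 P Q) (b : A) :
    Q.p 0 b = Fin.insertLastAfter (P.p 0 ((P.p 1).symm (finLast A))) (P.p 0 b) :=
  Fin.ext (h.2 _ (by simp [finLast]) b)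

variable {P : RPair A} {α : A}

theorem smap_apply_of_val_eq_zero (h : (P.p 1 α : ℕ) = 0) : Smap P α = (P.p 0).symm (fin0 A) :=
  if_pos h

theorem smap_apply_of_val_eq_succ (h : (P.p 1 α : ℕ) = P.p 1 ((P.p 0).symm (finLast A)) + 1) :
    Smap P α = (P.p 0).symm (finSucc (P.p 0 ((P.p 1).symm (finLast A)))) :=
  (if_neg (by omega)).trans (if_pos h)

theorem smap_apply_of_val_ne (h₀ : (P.p 1 α : ℕ) ≠ 0)
    (h : (P.p 1 α : ℕ) ≠ P.p 1 ((P.p 0).symm (finLast A)) + 1) :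
    Smap P α = (P.p 0).symm (finSucc (P.p 0 ((P.p 1).symm (finPred (P.p 1 α))))) :=
  (if_neg h₀).trans (if_neg h)

variable (P)

theorem smap_comp_conj_splitRotate :
    Smap P ∘ (P.p 1).symm.conj (Fin.splitRotate (P.p 1 ((P.p 0).symm (finLast A)))) =
      (P.p 0).symm.conj finSucc := by
  funext β
  simp only [Function.comp_apply, Equiv.conj_apply, Equiv.symm_symm]
  rcases eq_or_ne β ((P.p 0).symm (finLast A)) with rfl | hz₀
  · rw [smap_apply_of_val_eq_zero (by simp [Fin.val_splitRotate]), Equiv.apply_symm_apply,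
      finSucc_finLast]
  have hne₀ := Fin.val_ne_iff.mpr ((P.p 1).injective.ne hz₀)
  rcases eq_or_ne β ((P.p 1).symm (finLast A)) with rfl | hz₁
  · simp only [Equiv.apply_symm_apply, val_finLast] at hne₀
    rw [smap_apply_of_val_eq_succ (by simp [Fin.val_splitRotate, val_finLast, hne₀])]
  have hne₁ : (P.p 1 β : ℕ) ≠ Fintype.card A - 1 := by
    simpa [← Fin.val_inj, finLast] using (P.p 1).injective.ne hz₁
  have hval : (Fin.splitRotate (P.p 1 ((P.p 0).symm (finLast A))) (P.p 1 β) : ℕ) =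
      P.p 1 β + 1 := by
    simp [Fin.val_splitRotate, hne₀, hne₁]
  have hpred : finPred (Fin.splitRotate (P.p 1 ((P.p 0).symm (finLast A))) (P.p 1 β)) =
      P.p 1 β :=
    Fin.ext (by simp [finPred, hval])
  rw [smap_apply_of_val_ne (by simp [hval]) (by simpa [hval] using hne₀), Equiv.apply_symm_apply,
    hpred, Equiv.symm_apply_apply]

theorem smap_comp_conj_finSucc :
    Smap P ∘ (P.p 1).symm.conj finSucc =
      (P.p 0).symm.conj (Fin.splitRotate (P.p 0 ((P.p 1).symm (finLast A)))) := by
  funext β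
  simp only [Function.comp_apply, Equiv.conj_apply, Equiv.symm_symm]
  rcases eq_or_ne β ((P.p 1).symm (finLast A)) with rfl | hz₁
  · rw [Equiv.apply_symm_apply, finSucc_finLast, smap_apply_of_val_eq_zero (by simp [fin0])]
    congr 1
    ext
    simp [Fin.val_splitRotate, fin0]
  have hne₁ := Fin.val_ne_iff.mpr ((P.p 0).injective.ne hz₁)
  have hlast₁ : (P.p 1 β : ℕ) ≠ Fintype.card A - 1 := by
    simpa [← Fin.val_inj, finLast] using (P.p 1).injective.ne hz₁
  have hsucc : (finSucc (P.p 1 β) : ℕ) = P.p 1 β + 1 := by simp [val_finSucc, hlast₁]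
  rcases eq_or_ne β ((P.p 0).symm (finLast A)) with rfl | hz₀
  · simp only [Equiv.apply_symm_apply, val_finLast] at hne₁
    rw [smap_apply_of_val_eq_succ (by simp [hsucc])]
    congr 1
    ext
    simp only [val_finSucc, Fin.val_splitRotate, Equiv.apply_symm_apply, val_finLast]
    split_ifs <;> omega
  have hne₀ := Fin.val_ne_iff.mpr ((P.p 1).injective.ne hz₀)
  have hlast₀ : (P.p 0 β : ℕ) ≠ Fintype.card A - 1 := by
    simpa [← Fin.val_inj, finLast] using (P.p 0).injective.ne hz₀
  have hpred : finPred (finSucc (P.p 1 β)) = P.p 1 β := Fin.ext (by simp [finPred, hsucc])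
  rw [smap_apply_of_val_ne (by simp [hsucc]) (by simpa [hsucc] using hne₀),
    Equiv.apply_symm_apply, hpred, Equiv.symm_apply_apply]
  congr 1
  ext
  simp only [val_finSucc, Fin.val_splitRotate]
  split_ifs <;> omega

theorem smap_eq_of_rmove_zero {P Q : RPair A} (h : Rmove 0 P Q) : Smap Q = Smap P := by
  have hm : Q.p 1 ((Q.p 0).symm (finLast A)) = P.p 1 ((P.p 0).symm (finLast A)) := by
    rw [h.1, h.p_one_apply, Fin.insertLastAfter_self]
  have hQ := smap_comp_conj_splitRotate Q
  rw [hm, Equiv.symm_conj_eq_of_commute h.p_one_apply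
    (Fin.commute_insertLastAfter_splitRotate _), h.1, ← smap_comp_conj_splitRotate P] at hQ
  exact ((P.p 1).symm.conj_surjective
    (Finite.surjective_of_injective (Fin.splitRotate_injective _))).injective_comp_right hQ

theorem smap_eq_of_rmove_one {P Q : RPair A} (h : Rmove 1 P Q) : Smap Q = Smap P := by
  have hm : Q.p 0 ((Q.p 1).symm (finLast A)) = P.p 0 ((P.p 1).symm (finLast A)) := by
    rw [h.1, h.p_zero_apply, Fin.insertLastAfter_self]
  have hQ := smap_comp_conj_finSucc Q
  rw [hm, Equiv.symm_conj_eq_of_commute h.p_zero_apply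
    (Fin.commute_insertLastAfter_splitRotate _), h.1, ← smap_comp_conj_finSucc P] at hQ
  exact ((P.p 1).symm.conj_surjective
    (Finite.surjective_of_injective finSucc_injective)).injective_comp_right hQ

theorem symm_fin0_eq_of_rmove_one {P Q : RPair A} (h : Rmove 1 P Q) :
    (Q.p 0).symm (fin0 A) = (P.p 0).symm (fin0 A) := by
  rw [Equiv.symm_apply_eq, h.p_zero_apply, Equiv.apply_symm_apply]
  ext
  simp [Fin.val_insertLastAfter, fin0]

theorem mval_eq_of_rmove {ε : Fin 2} {P Q : RPair A} (h : Rmove ε P Q) : Mval Q = Mval P := by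
  obtain rfl | rfl : ε = 0 ∨ ε = 1 := by omega
  · rw [Mval, Mval, smap_eq_of_rmove_zero h, h.1]
  · rw [Mval, Mval, smap_eq_of_rmove_one h, symm_fin0_eq_of_rmove_one h]

end Smap

theorem Mval_rauzy_invariant_general
    {A : Type*} [Fintype A] [Nonempty A] (P : RPair A)
    (Q : RPair A) (hQ : InRauzyClass P Q) :
    Mval Q = Mval P := by
  induction hQ with
  | refl => rfl
  | tail _ hstep ih =>
    obtain ⟨ε, hε⟩ := hstep
    exact (mval_eq_of_rmove hε).trans ih

/-- `M` is a Rauzy class invariant. -/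
theorem Mval_rauzy_invariant
    {A : Type*} [Fintype A] [Nonempty A] (P : RPair A) (hP : IrreduciblePair P)
    (Q : RPair A) (hQ : InRauzyClass P Q) :
    Mval Q = Mval P :=
  Mval_rauzy_invariant_general P Q hQ
end

section
/- Define H : pairs on A → pairs on A by H(p) = (p0', p1') with p_ε'(b) = #A + 1 − p_ε(b). Then for any irreducible pair p and ε ∈ {0,1}, the left Rauzy move of type ε satisfies ε̃ p = H(ε H(p)). -/
variable {A : Type*} [Fintype A]

/-- The left Rauzy move of type `ε`, as a relation: row `ε` is fixed; in row
`1-ε` the first entry is cycled to just before the letter `a` occupying the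
first position of row `ε` (0-indexed positions). -/
def Lmove {A : Type*} [Fintype A] (ε : Fin 2) (P Q : RPair A) : Prop :=
  Q.p ε = P.p ε ∧
  ∀ a : A, ((P.p ε) a).val = 0 →
    ∀ b : A, ((Q.p (1 - ε)) b).val =
      if ((P.p (1 - ε)) b).val = 0 then ((P.p (1 - ε)) a).val - 1
      else if ((P.p (1 - ε)) b).val < ((P.p (1 - ε)) a).val then ((P.p (1 - ε)) b).val - 1
      else ((P.p (1 - ε)) b).val

/-- `H(p)` reverses both rows: `p_ε'(b) = #A + 1 - p_ε(b)`. -/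
def Hmap {A : Type*} [Fintype A] (P : RPair A) : RPair A :=
  ⟨fun ε => (P.p ε).trans (Fin.revPerm : Equiv.Perm (Fin (Fintype.card A)))⟩

lemma Nat.left_cycle_eq_iff_rev_right_cycle {n x y q : ℕ} (hx : x < n) (hy : y < n)
    (hq : q < n) :
    q = (if x = 0 then y - 1 else if x < y then x - 1 else x) ↔
      n - (q + 1) =
        if n - (x + 1) ≤ n - (y + 1) then n - (x + 1)
        else if n - (x + 1) < n - 1 then n - (x + 1) + 1
        else n - (y + 1) + 1 := by
  split_ifs <;> omega

@[simp]
lemma Hmap_p_apply_val (P : RPair A) (ε : Fin 2) (b : A) :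
    ((Hmap P).p ε b).val = Fintype.card A - ((P.p ε b).val + 1) :=
  Fin.val_rev _

lemma Hmap_p_eq_iff (P Q : RPair A) (ε : Fin 2) :
    (Hmap Q).p ε = (Hmap P).p ε ↔ Q.p ε = P.p ε := by
  simp [Hmap, Equiv.ext_iff]

lemma Hmap_p_apply_val_eq_last_iff (P : RPair A) (ε : Fin 2) (a : A) :
    ((Hmap P).p ε a).val = Fintype.card A - 1 ↔ (P.p ε a).val = 0 := by
  have := (P.p ε a).isLt
  rw [Hmap_p_apply_val]
  omega

theorem left_move_eq_H_move_H_general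
    {A : Type*} [Fintype A] (P : RPair A)
    (ε : Fin 2) (Q : RPair A) :
    Lmove ε P Q ↔ Rmove ε (Hmap P) (Hmap Q) := by
  refine and_congr (Hmap_p_eq_iff P Q ε).symm (forall_congr' fun a => ?_)
  rw [Hmap_p_apply_val_eq_last_iff]
  refine imp_congr_right fun _ => forall_congr' fun b => ?_
  simp only [Hmap_p_apply_val]
  exact Nat.left_cycle_eq_iff_rev_right_cycle (P.p (1 - ε) b).isLt (P.p (1 - ε) a).isLt
    (Q.p (1 - ε) b).isLt

/-- The left Rauzy move of type `ε` satisfies `ε̃ p = H(ε H(p))`. -/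
theorem left_move_eq_H_move_H
    {A : Type*} [Fintype A] (P : RPair A) (hP : IrreduciblePair P)
    (ε : Fin 2) (Q : RPair A) :
    Lmove ε P Q ↔ Rmove ε (Hmap P) (Hmap Q) :=
  left_move_eq_H_move_H_general P ε Q
end

section
/- Define Arf(p) = #{v ∈ Z_2^A : Q_p(v) = 1}. If q belongs to the non-labeled Extended Rauzy class of p (i.e., q is obtained from p by a finite sequence of Rauzy moves, left Rauzy moves, and renamings of the alphabet), then Arf(q) = Arf(p). -/
variable {A : Type*} [Fintype A]

/-- `L_p(a,b) = 1` iff the two rows order `a` and `b` oppositely. -/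
def Lcoef {A : Type*} [Fintype A] (P : RPair A) (a b : A) : ZMod 2 :=
  if ((P.p 0) a < (P.p 0) b ∧ (P.p 1) b < (P.p 1) a) ∨
     ((P.p 0) b < (P.p 0) a ∧ (P.p 1) a < (P.p 1) b) then 1 else 0

/-- The canonical quadratic form
`Q_p(v) = Σ_a v_a² + Σ_{{a,b}} L_p(a,b) v_a v_b (mod 2)`,
where each unordered pair `{a,b}` is summed once (ordered by row 0). -/
def QF {A : Type*} [Fintype A] (P : RPair A) (v : A → ZMod 2) : ZMod 2 :=
  (∑ a : A, v a * v a) +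
    ∑ a : A, ∑ b : A, if (P.p 0) a < (P.p 0) b then Lcoef P a b * v a * v b else 0

/-- `Arf(p)`: the number of vectors `v ∈ Z₂^A` with `Q_p(v) = 1`. -/
def Arf {A : Type*} [Fintype A] [DecidableEq A] (P : RPair A) : ℕ :=
  (Finset.univ.filter (fun v : A → ZMod 2 => QF P v = 1)).card

/-- One step of the non-labeled extended Rauzy equivalence: a Rauzy move,
a left Rauzy move, or a renaming of the alphabet. -/
def ExtStep {A : Type*} [Fintype A] (P Q : RPair A) : Prop :=
  (∃ ε, Rmove ε P Q) ∨ (∃ ε, Lmove ε P Q) ∨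
  (∃ τ : A ≃ A, ∀ (ε : Fin 2) (b : A), (Q.p ε) b = (P.p ε) (τ b))

/-!
Write `Q_p(v) = ∑ v_a² + ∑ v_a v_b`, the second sum over the pairs `(a, b)` that row 0 orders
`a < b` and row 1 orders `b < a`. Swapping the rows or reversing both of them only transposes
this relation, and a renaming permutes the coordinates; so they preserve `Arf`, and they reduce
left moves and right moves of type 1 to right moves of type 0. Such a move only changes the
position of the letter `w` ending row 1: it toggles exactly the pairs `{a, w}` with `a` after `z`
in row 1, where `z` ends row 0. In characteristic 2 the substitution `v_z ↦ v_z + v_w` changes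
`Q_p` by the same amount and is an involution (if `z = w` the move changes nothing).
-/

open Finset

section RelQuadForm

variable {ι κ K : Type*} [Fintype ι] [Fintype κ] [CommRing K]

def relQuadForm (R : ι → ι → Prop) [DecidableRel R] (v : ι → K) : K :=
  ∑ a, v a * v a + ∑ a, ∑ b, if R a b then v a * v b else 0

theorem relQuadForm_congr {R R' : ι → ι → Prop} [DecidableRel R] [DecidableRel R']
    (h : ∀ a b, R a b ↔ R' a b) (v : ι → K) : relQuadForm R v = relQuadForm R' v := by
  simp only [relQuadForm, h]

theorem relQuadForm_flip (R : ι → ι → Prop) [DecidableRel R] (v : ι → K) :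
    relQuadForm (fun a b => R b a) v = relQuadForm R v := by
  rw [relQuadForm, relQuadForm, sum_comm (s := univ) (t := univ)]
  exact congrArg _ <| sum_congr rfl fun _ _ => sum_congr rfl fun _ _ => by rw [mul_comm]

theorem relQuadForm_comp_equiv (R : κ → κ → Prop) [DecidableRel R] (τ : ι ≃ κ) (v : ι → K) :
    relQuadForm (fun a b => R (τ a) (τ b)) v = relQuadForm R (v ∘ τ.symm) := by
  simp only [relQuadForm, Function.comp_apply]
  congr 1
  · exact Fintype.sum_equiv τ _ _ (by simp)
  · exact Fintype.sum_equiv τ _ _ fun a => Fintype.sum_equiv τ _ _ (by simp)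

theorem relQuadForm_sub (R R' : ι → ι → Prop) [DecidableRel R] [DecidableRel R'] (v : ι → K) :
    relQuadForm R' v - relQuadForm R v =
      ∑ a, ∑ b, ((if R' a b then v a * v b else 0) - if R a b then v a * v b else 0) := by
  simp only [relQuadForm, sum_sub_distrib]
  ring

theorem relQuadForm_add_single [DecidableEq ι] [CharP K 2] (R : ι → ι → Prop) [DecidableRel R]
    {z : ι} (hz : ¬ R z z) (v : ι → K) (t : K) :
    relQuadForm R (v + Pi.single z t) = relQuadForm R v + t * t +
      t * ∑ a, ((if R a z then v a else 0) + if R z a then v a else 0) := by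
  set e : ι → K := Pi.single z t with he
  have hcross : ∀ a b, (if R a b then (v a + e a) * (v b + e b) else 0) =
      (if R a b then v a * v b else 0) + (if R a b then e a * v b else 0) +
        ((if R a b then v a * e b else 0) + if R a b then e a * e b else 0) := by
    intro a b
    split_ifs <;> ring
  have hdiag : ∀ a, (v a + e a) * (v a + e a) = v a * v a + e a * e a := by
    intro a
    rw [add_mul_self_eq, mul_assoc, two_mul, CharTwo.add_self_eq_zero, add_zero]
  have hleft : ∑ a, ∑ b, (if R a b then e a * v b else 0) = t * ∑ b, if R z b then v b else 0 := by
    rw [Fintype.sum_eq_single z fun a ha => by simp [he, ha], mul_sum]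
    simp [he, mul_ite]
  have hright : ∑ a, ∑ b, (if R a b then v a * e b else 0) = t * ∑ a, if R a z then v a else 0 := by
    rw [mul_sum]
    refine sum_congr rfl fun a _ => ?_
    rw [Fintype.sum_eq_single z fun b hb => by simp [he, hb]]
    simp [he, mul_ite, mul_comm]
  have hboth : ∑ a, ∑ b, (if R a b then e a * e b else 0) = 0 :=
    sum_eq_zero fun a _ => sum_eq_zero fun b _ => by
      by_cases ha : a = z <;> by_cases hb : b = z <;> simp_all
  have hsq : ∑ a, e a * e a = t * t := by
    rw [Fintype.sum_eq_single z fun a ha => by simp [he, ha]]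
    simp [he]
  simp only [relQuadForm, Pi.add_apply, hcross, hdiag, sum_add_distrib, hleft, hright, hboth, hsq]
  ring

theorem sum_sum_add_eq_of_support_subset_cross {M : Type*} [AddCommMonoid M] [DecidableEq ι]
    (f : ι → ι → M) (w : ι) (hf : ∀ a b, a ≠ w → b ≠ w → f a b = 0) :
    ∑ a, ∑ b, f a b + f w w = ∑ a, f a w + ∑ b, f w b := by
  have hrow : ∀ a, ∑ b, f a b + (if a = w then f w w else 0) =
      f a w + if a = w then ∑ b, f w b else 0 := by
    intro a
    by_cases ha : a = w
    · subst ha; simp [add_comm]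
    · simp [ha, Fintype.sum_eq_single w (hf a · ha)]
  simpa [sum_add_distrib] using sum_congr rfl fun a (_ : a ∈ univ) => hrow a

end RelQuadForm

theorem Fin.le_of_val_eq_sub_one {n : ℕ} {i j : Fin n} (hj : j.val = n - 1) : i ≤ j := by
  rw [Fin.le_def, hj]
  exact Nat.le_sub_one_of_lt i.isLt

theorem Fin.lt_iff_ne_of_val_eq_sub_one {n : ℕ} {i j : Fin n} (hj : j.val = n - 1) :
    i < j ↔ i ≠ j :=
  ⟨ne_of_lt, (Fin.le_of_val_eq_sub_one hj).lt_of_ne⟩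

namespace RPair

def Inverts (P : RPair A) (a b : A) : Prop :=
  P.p 0 a < P.p 0 b ∧ P.p 1 b < P.p 1 a

instance (P : RPair A) : DecidableRel P.Inverts := fun _ _ => instDecidableAnd

theorem inverts_irrefl (P : RPair A) (a : A) : ¬ P.Inverts a a :=
  fun h => lt_irrefl _ h.1

theorem QF_eq_relQuadForm (P : RPair A) (v : A → ZMod 2) : QF P v = relQuadForm P.Inverts v := by
  unfold QF relQuadForm
  congr 1
  refine sum_congr rfl fun a _ => sum_congr rfl fun b _ => ?_
  by_cases hab : P.p 0 a < P.p 0 b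
  · simp [Lcoef, Inverts, hab, lt_asymm hab]
  · simp [Inverts, hab]

def swap (P : RPair A) : RPair A := ⟨fun ε => P.p (1 - ε)⟩

def reverse (P : RPair A) : RPair A := ⟨fun ε => (P.p ε).trans Fin.revPerm⟩

theorem inverts_swap (P : RPair A) (a b : A) : P.swap.Inverts a b ↔ P.Inverts b a :=
  and_comm

theorem inverts_reverse (P : RPair A) (a b : A) : P.reverse.Inverts a b ↔ P.Inverts b a := by
  simp [Inverts, reverse]

theorem QF_swap (P : RPair A) (v : A → ZMod 2) : QF P.swap v = QF P v := by
  rw [QF_eq_relQuadForm, QF_eq_relQuadForm, relQuadForm_congr (inverts_swap P), relQuadForm_flip]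

theorem QF_reverse (P : RPair A) (v : A → ZMod 2) : QF P.reverse v = QF P v := by
  rw [QF_eq_relQuadForm, QF_eq_relQuadForm, relQuadForm_congr (inverts_reverse P),
    relQuadForm_flip]

theorem QF_rename {P Q : RPair A} (τ : A ≃ A) (h : ∀ ε b, Q.p ε b = P.p ε (τ b))
    (v : A → ZMod 2) : QF Q v = QF P (v ∘ τ.symm) := by
  rw [QF_eq_relQuadForm, QF_eq_relQuadForm, ← relQuadForm_comp_equiv _ τ]
  exact relQuadForm_congr (fun a b => by simp only [Inverts, h]) v

end RPair

theorem arf_eq_of_QF_eq_comp [DecidableEq A] {P Q : RPair A} (e : (A → ZMod 2) ≃ (A → ZMod 2))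
    (h : ∀ v, QF Q v = QF P (e v)) : Arf Q = Arf P :=
  card_equiv e fun v => by simp [h]

theorem Rmove.swap {P Q : RPair A} (h : Rmove 1 P Q) : Rmove 0 P.swap Q.swap :=
  h

theorem Lmove.reverse {ε : Fin 2} {P Q : RPair A} (h : Lmove ε P Q) :
    Rmove ε P.reverse Q.reverse := by
  refine ⟨by simp [RPair.reverse, h.1], fun z hz b => ?_⟩
  have hn : 0 < Fintype.card A := Fintype.card_pos_iff.mpr ⟨z⟩
  simp only [RPair.reverse, Equiv.trans_apply, Fin.revPerm_apply, Fin.val_rev] at hz ⊢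
  have hb := (P.p (1 - ε) b).isLt
  have hz' := (P.p (1 - ε) z).isLt
  rw [h.2 z (by omega) b]
  split_ifs <;> omega

section RmoveZero

variable {P Q : RPair A} {z w : A}

theorem Rmove.val_apply (h : Rmove 0 P Q)
    (hz : (P.p 0 z).val = Fintype.card A - 1) (b : A) :
    (Q.p 1 b).val =
      if (P.p 1 b).val ≤ (P.p 1 z).val then (P.p 1 b).val
      else if (P.p 1 b).val < Fintype.card A - 1 then (P.p 1 b).val + 1
      else (P.p 1 z).val + 1 :=
  h.2 z hz b

theorem Rmove.lt_iff_of_ne (h : Rmove 0 P Q)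
    (hz : (P.p 0 z).val = Fintype.card A - 1) (hw : (P.p 1 w).val = Fintype.card A - 1)
    {a b : A} (ha : a ≠ w) (hb : b ≠ w) : Q.p 1 a < Q.p 1 b ↔ P.p 1 a < P.p 1 b := by
  have ha' := Fin.val_ne_of_ne ((P.p 1).injective.ne ha)
  have hb' := Fin.val_ne_of_ne ((P.p 1).injective.ne hb)
  have := (P.p 1 a).isLt
  have := (P.p 1 b).isLt
  rw [Fin.lt_def, Fin.lt_def, h.val_apply hz a, h.val_apply hz b]
  split_ifs <;> omega

theorem Rmove.last_lt_iff (h : Rmove 0 P Q)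
    (hz : (P.p 0 z).val = Fintype.card A - 1) (hw : (P.p 1 w).val = Fintype.card A - 1)
    {a : A} (ha : a ≠ w) : Q.p 1 w < Q.p 1 a ↔ P.p 1 z < P.p 1 a := by
  have ha' := Fin.val_ne_of_ne ((P.p 1).injective.ne ha)
  have := (P.p 1 a).isLt
  have := (P.p 1 z).isLt
  rw [Fin.lt_def, Fin.lt_def, h.val_apply hz a, h.val_apply hz w]
  split_ifs <;> omega

theorem Rmove.lt_last_iff (h : Rmove 0 P Q)
    (hz : (P.p 0 z).val = Fintype.card A - 1) (hw : (P.p 1 w).val = Fintype.card A - 1)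
    {a : A} (ha : a ≠ w) : Q.p 1 a < Q.p 1 w ↔ ¬ P.p 1 z < P.p 1 a := by
  rw [← h.last_lt_iff hz hw ha, not_lt, lt_iff_le_and_ne]
  exact and_iff_left ((Q.p 1).injective.ne ha)

theorem Rmove.QF_eq_add [DecidableEq A] (h : Rmove 0 P Q)
    (hz : (P.p 0 z).val = Fintype.card A - 1) (hw : (P.p 1 w).val = Fintype.card A - 1)
    (v : A → ZMod 2) :
    QF Q v = QF P v + ∑ a, if a ≠ w ∧ P.p 1 z < P.p 1 a then v a * v w else 0 := by
  set f : A → A → ZMod 2 := fun a b =>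
    (if Q.Inverts a b then v a * v b else 0) - if P.Inverts a b then v a * v b else 0
  have hoff : ∀ a b, a ≠ w → b ≠ w → f a b = 0 := fun a b ha hb => by
    simp [f, RPair.Inverts, h.1, h.lt_iff_of_ne hz hw hb ha]
  have hww : f w w = 0 := by simp [f, RPair.inverts_irrefl]
  have hcross : ∀ a, f a w + f w a = if a ≠ w ∧ P.p 1 z < P.p 1 a then v a * v w else 0 := by
    intro a
    by_cases ha : a = w
    · simp [f, ha, RPair.inverts_irrefl]
    have hsw : P.p 1 a < P.p 1 w := (Fin.lt_iff_ne_of_val_eq_sub_one hw).2 ((P.p 1).injective.ne ha)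
    have hr : P.p 0 a ≠ P.p 0 w := (P.p 0).injective.ne ha
    simp only [f, RPair.Inverts, h.1, h.last_lt_iff hz hw ha, h.lt_last_iff hz hw ha, hsw,
      not_lt_of_gt hsw]
    rcases hr.lt_or_gt with hlt | hlt <;> by_cases hza : P.p 1 z < P.p 1 a <;>
      simp [hlt, not_lt_of_gt hlt, hza, ha, mul_comm]
  have hsum := sum_sum_add_eq_of_support_subset_cross f w hoff
  rw [hww, add_zero, ← sum_add_distrib] at hsum
  rw [RPair.QF_eq_relQuadForm, RPair.QF_eq_relQuadForm, ← sub_eq_iff_eq_add', relQuadForm_sub]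
  exact hsum.trans (sum_congr rfl fun a _ => hcross a)

end RmoveZero

theorem QF_add_single_of_last [DecidableEq A] (P : RPair A) {z : A}
    (hz : (P.p 0 z).val = Fintype.card A - 1) (v : A → ZMod 2) (t : ZMod 2) :
    QF P (v + Pi.single z t) = QF P v + t * t + t * ∑ a, if P.p 1 z < P.p 1 a then v a else 0 := by
  rw [RPair.QF_eq_relQuadForm, RPair.QF_eq_relQuadForm,
    relQuadForm_add_single _ (P.inverts_irrefl z)]
  congr 2
  refine sum_congr rfl fun a _ => ?_
  have hza : ¬ P.p 0 z < P.p 0 a := not_lt_of_ge (Fin.le_of_val_eq_sub_one hz)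
  by_cases ha : a = z
  · simp [ha, RPair.inverts_irrefl]
  · have haz : P.p 0 a < P.p 0 z := (Fin.lt_iff_ne_of_val_eq_sub_one hz).2 ((P.p 0).injective.ne ha)
    simp [RPair.Inverts, haz, hza]

theorem arf_eq_of_rmove_zero [DecidableEq A] {P Q : RPair A} (h : Rmove 0 P Q) :
    Arf Q = Arf P := by
  cases isEmpty_or_nonempty A
  · exact arf_eq_of_QF_eq_comp (Equiv.refl _) fun v => by simp [QF]
  have hn : 0 < Fintype.card A := Fintype.card_pos
  set z := (P.p 0).symm ⟨Fintype.card A - 1, by omega⟩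
  set w := (P.p 1).symm ⟨Fintype.card A - 1, by omega⟩
  have hz : (P.p 0 z).val = Fintype.card A - 1 := by simp [z]
  have hw : (P.p 1 w).val = Fintype.card A - 1 := by simp [w]
  by_cases hzw : z = w
  · refine arf_eq_of_QF_eq_comp (Equiv.refl _) fun v => ?_
    have hzmax : ∀ a, ¬ P.p 1 z < P.p 1 a :=
      fun a => not_lt_of_ge (Fin.le_of_val_eq_sub_one (hzw ▸ hw))
    simp [h.QF_eq_add hz hw, hzmax]
  set e : (A → ZMod 2) → A → ZMod 2 := fun v => v + Pi.single z (v w)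
  have he : Function.Involutive e := fun v => by
    ext a
    by_cases ha : a = z <;> simp [e, ha, Ne.symm hzw, add_assoc, CharTwo.add_self_eq_zero]
  refine arf_eq_of_QF_eq_comp he.toPerm fun v => ?_
  have hzw' : P.p 1 z < P.p 1 w :=
    (Fin.lt_iff_ne_of_val_eq_sub_one hw).2 ((P.p 1).injective.ne hzw)
  have hsplit : (∑ a, if P.p 1 z < P.p 1 a then v a else 0) =
      v w + ∑ a, if a ≠ w ∧ P.p 1 z < P.p 1 a then v a else 0 := by
    have hterm : ∀ a, (if P.p 1 z < P.p 1 a then v a else 0) =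
        (if a = w then v a else 0) + if a ≠ w ∧ P.p 1 z < P.p 1 a then v a else 0 := by
      intro a
      by_cases ha : a = w <;> simp [ha, hzw']
    simp [hterm, sum_add_distrib]
  rw [h.QF_eq_add hz hw, Function.Involutive.coe_toPerm, QF_add_single_of_last P hz, hsplit,
    mul_add, add_assoc (QF P v), ← add_assoc (v w * v w), CharTwo.add_self_eq_zero, zero_add, mul_sum]
  exact congrArg _ (sum_congr rfl fun a _ => by split_ifs <;> ring)

theorem arf_swap [DecidableEq A] (P : RPair A) : Arf P.swap = Arf P :=
  arf_eq_of_QF_eq_comp (Equiv.refl _) P.QF_swap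

theorem arf_reverse [DecidableEq A] (P : RPair A) : Arf P.reverse = Arf P :=
  arf_eq_of_QF_eq_comp (Equiv.refl _) P.QF_reverse

theorem arf_eq_of_rmove [DecidableEq A] {ε : Fin 2} {P Q : RPair A} (h : Rmove ε P Q) :
    Arf Q = Arf P := by
  fin_cases ε
  · exact arf_eq_of_rmove_zero h
  · simpa only [arf_swap] using arf_eq_of_rmove_zero (Rmove.swap h)

theorem arf_eq_of_lmove [DecidableEq A] {ε : Fin 2} {P Q : RPair A} (h : Lmove ε P Q) :
    Arf Q = Arf P := by
  simpa only [arf_reverse] using arf_eq_of_rmove h.reverse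

theorem arf_eq_of_rename [DecidableEq A] {P Q : RPair A} (τ : A ≃ A)
    (h : ∀ ε b, Q.p ε b = P.p ε (τ b)) : Arf Q = Arf P :=
  arf_eq_of_QF_eq_comp (τ.arrowCongr (Equiv.refl _)) (RPair.QF_rename τ h)

theorem ExtStep.arf_eq [DecidableEq A] {P Q : RPair A} (h : ExtStep P Q) : Arf Q = Arf P := by
  rcases h with ⟨ε, h⟩ | ⟨ε, h⟩ | ⟨τ, h⟩
  · exact arf_eq_of_rmove h
  · exact arf_eq_of_lmove h
  · exact arf_eq_of_rename τ h

theorem arf_extended_invariant_general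
    {A : Type*} [Fintype A] [DecidableEq A] (P Q : RPair A)
    (h : Relation.ReflTransGen (ExtStep (A := A)) P Q) :
    Arf Q = Arf P := by
  induction h with
  | refl => rfl
  | tail _ hstep ih => exact hstep.arf_eq.trans ih

/-- `Arf` is invariant on non-labeled extended Rauzy classes. -/
theorem arf_extended_invariant
    {A : Type*} [Fintype A] [DecidableEq A] (P Q : RPair A) (hP : IrreduciblePair P)
    (h : Relation.ReflTransGen (ExtStep (A := A)) P Q) :
    Arf Q = Arf P :=
  arf_extended_invariant_general P Q h
end

section
/- Let p be a piece-wise order reversing pair composed of N1 1-blocks, N2 2-blocks, N4 4-blocks and N5 5-blocks (and no other blocks). Then Arf(p) = 2^{N1 + 2N2 + 4N4 + 5N5 + 1} + (−1)^{N4 + N5} 2^{N1 + N2 + 2N4 + 3N5}. -/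
variable {A : Type*} [Fintype A]

/-!
Write `v ∈ Z₂^A` as the indicator of `S ⊆ A`. Then `Q_p(v) ≡ #S + inv S (mod 2)`, where `inv S`
counts the pairs of `S` ordered oppositely by the two rows, so `2 Arf(p) = 2^#A - W` with
`W = ∑_S (-1)^(#S + inv S)`. The first letter of each row is inverted with every other letter;
summing over whether these two letters lie in `S` gives `W = -2 ∑_{S ⊆ M} (-1)^(inv S)`, where `M`
is the union of the blocks. Inside a block every pair is inverted and letters of distinct blocks
never are, so `inv` is additive over blocks and the sum factors into `∏_B ∑_{T ⊆ B} (-1)^C(#T, 2)`,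
whose factors are `2, 2, -4, -8` for blocks of `1, 2, 4, 5` letters.
-/

open Finset

section PairCount

variable {α : Type*} (r : α → α → Prop) [DecidableRel r]

def pairCount (s : Finset α) : ℕ := ∑ a ∈ s, ∑ b ∈ s, if r a b then 1 else 0

variable {r} {s t : Finset α}

lemma pairCount_congr {r' : α → α → Prop} [DecidableRel r']
    (h : ∀ a ∈ s, ∀ b ∈ s, r a b ↔ r' a b) : pairCount r s = pairCount r' s :=
  sum_congr rfl fun a ha => sum_congr rfl fun b hb => if_congr (h a ha b hb) rfl rfl

lemma pairCount_union [DecidableEq α] (hst : Disjoint s t) :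
    pairCount r (s ∪ t) = pairCount r s + pairCount r t +
      ((∑ a ∈ s, ∑ b ∈ t, if r a b then (1 : ℕ) else 0) +
        ∑ a ∈ t, ∑ b ∈ s, if r a b then 1 else 0) := by
  simp only [pairCount, sum_union hst, sum_add_distrib]
  ring

lemma pairCount_union_of_unrelated [DecidableEq α] (hst : Disjoint s t)
    (h : ∀ a ∈ s, ∀ b ∈ t, ¬ r a b ∧ ¬ r b a) :
    pairCount r (s ∪ t) = pairCount r s + pairCount r t := by
  rw [pairCount_union hst, add_eq_left, add_eq_zero]
  constructor <;> refine sum_eq_zero fun a ha => sum_eq_zero fun b hb => if_neg ?_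
  exacts [(h a ha b hb).1, (h b hb a ha).2]

lemma pairCount_insert [DecidableEq α] (hr : ∀ a b, r a b → ¬ r b a) {x : α} (hx : x ∉ s)
    (h : ∀ b ∈ s, r x b ∨ r b x) :
    pairCount r (insert x s) = pairCount r s + #s := by
  have hxx : ¬ r x x := fun hxx => hr x x hxx hxx
  have hsingle : pairCount r {x} = 0 := by simp [pairCount, hxx]
  rw [insert_eq, pairCount_union (disjoint_singleton_left.2 hx), hsingle, zero_add]
  congr 1
  simp only [sum_singleton, ← sum_add_distrib, card_eq_sum_ones]
  refine sum_congr rfl fun b hb => ?_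
  rcases h b hb with hxb | hbx
  · rw [if_pos hxb, if_neg (hr _ _ hxb)]
  · rw [if_neg (hr _ _ hbx), if_pos hbx]

lemma pairCount_lt_of_injOn [DecidableEq α] {β : Type*} [LinearOrder β] {f : α → β}
    (hf : Set.InjOn f s) :
    pairCount (fun a b => f a < f b) s = (#s).choose 2 := by
  induction s using Finset.induction_on_max_value f with
  | empty => simp [pairCount]
  | insert x s hx hmax ih =>
    have hlt : ∀ b ∈ s, f b < f x := fun b hb => (hmax b hb).lt_of_ne fun hfb =>
      hx (hf (mem_insert_of_mem hb) (mem_insert_self x s) hfb ▸ hb)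
    rw [pairCount_insert (fun a b => lt_asymm) hx (fun b hb => Or.inr (hlt b hb)),
      ih (hf.mono (subset_insert x s)), card_insert_of_notMem hx, Nat.choose_succ_succ,
      Nat.choose_one_right, add_comm]

end PairCount

section Powerset

variable {α : Type*} [DecidableEq α] {r : α → α → Prop} [DecidableRel r]

lemma sum_powerset_union {M : Type*} [AddCommMonoid M] {s t : Finset α} (hst : Disjoint s t)
    (g : Finset α → M) :
    ∑ u ∈ (s ∪ t).powerset, g u = ∑ a ∈ s.powerset, ∑ b ∈ t.powerset, g (a ∪ b) := by
  rw [← sum_product']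
  refine sum_nbij' (fun u => (u ∩ s, u ∩ t)) (fun p => p.1 ∪ p.2) ?_ ?_ ?_ ?_ ?_
  · intro u _
    simp [inter_subset_right]
  · rintro ⟨a, b⟩ hab
    simp only [mem_product, mem_powerset] at hab ⊢
    exact union_subset_union hab.1 hab.2
  · intro u hu
    simp only [mem_powerset] at hu
    rw [← inter_union_distrib_left, inter_eq_left.2 hu]
  · rintro ⟨a, b⟩ hab
    simp only [mem_product, mem_powerset] at hab
    have hat : Disjoint a t := hst.mono_left hab.1
    have hbs : Disjoint b s := hst.symm.mono_left hab.2
    simp [union_inter_distrib_right, inter_eq_left.2 hab.1, inter_eq_left.2 hab.2,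
      disjoint_iff_inter_eq_empty.1 hat, disjoint_iff_inter_eq_empty.1 hbs]
  · intro u hu
    simp only [mem_powerset] at hu
    rw [← inter_union_distrib_left, inter_eq_left.2 hu]

lemma sum_powerset_biUnion_pow {ι R : Type*} [CommSemiring R] {I : Finset ι} {B : ι → Finset α}
    (hd : (I : Set ι).PairwiseDisjoint B)
    (hr : ∀ i ∈ I, ∀ j ∈ I, i ≠ j → ∀ a ∈ B i, ∀ b ∈ B j, ¬ r a b) (x : R) :
    ∑ S ∈ (I.biUnion B).powerset, x ^ pairCount r S =
      ∏ i ∈ I, ∑ T ∈ (B i).powerset, x ^ pairCount r T := by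
  classical
  induction I using Finset.induction_on with
  | empty => simp [pairCount]
  | insert i I hi ih =>
    have hdisj : Disjoint (B i) (I.biUnion B) := (disjoint_biUnion_right _ _ _).2 fun j hj =>
      hd (mem_insert_self i I) (mem_insert_of_mem hj) (ne_of_mem_of_not_mem hj hi).symm
    rw [biUnion_insert, sum_powerset_union hdisj, prod_insert hi,
      ← ih (hd.subset (by simp)) fun j hj j' hj' => hr j (mem_insert_of_mem hj) j'
        (mem_insert_of_mem hj'), sum_mul_sum]
    refine sum_congr rfl fun a ha => sum_congr rfl fun b hb => ?_
    rw [mem_powerset] at ha hb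
    rw [pairCount_union_of_unrelated (hdisj.mono ha hb), pow_add]
    intro p hp q hq
    obtain ⟨j, hj, hqj⟩ := mem_biUnion.1 (hb hq)
    have hij : i ≠ j := (ne_of_mem_of_not_mem hj hi).symm
    exact ⟨hr i (mem_insert_self i I) j (mem_insert_of_mem hj) hij p (ha hp) q hqj,
      hr j (mem_insert_of_mem hj) i (mem_insert_self i I) hij.symm q hqj p (ha hp)⟩

lemma sum_powerset_insert_insert_neg_one_pow {R : Type*} [CommRing R]
    (hr : ∀ a b, r a b → ¬ r b a) {s : Finset α} {x y : α} (hx : x ∉ insert y s)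
    (hy : y ∉ s) (hxr : ∀ b ∈ insert y s, r x b ∨ r b x) (hyr : ∀ b ∈ s, r y b ∨ r b y) :
    ∑ S ∈ (insert x (insert y s)).powerset, (-1 : R) ^ (#S + pairCount r S) =
      -2 * ∑ S ∈ s.powerset, (-1 : R) ^ pairCount r S := by
  rw [sum_powerset_insert hx, sum_powerset_insert hy, sum_powerset_insert hy,
    ← sum_add_distrib, ← sum_add_distrib, ← sum_add_distrib, mul_sum]
  refine sum_congr rfl fun S hS => ?_
  rw [mem_powerset] at hS
  have hyS : y ∉ S := fun h => hy (hS h)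
  have hxS : x ∉ insert y S := fun h => hx (insert_subset_insert y hS h)
  rw [pairCount_insert hr hxS fun b hb => hxr b (insert_subset_insert y hS hb),
    pairCount_insert hr (fun h => hxS (mem_insert_of_mem h)) fun b hb =>
      hxr b (mem_insert_of_mem (hS hb)),
    pairCount_insert hr hyS fun b hb => hyr b (hS hb), card_insert_of_notMem hxS,
    card_insert_of_notMem hyS, card_insert_of_notMem fun h => hxS (mem_insert_of_mem h)]
  -- with `ε = (-1) ^ #S` and `p = (-1) ^ pairCount r S` the four terms are `ε p, -p, -p, -ε p`
  have hsq : (-1 : R) ^ #S * (-1) ^ #S = 1 := by rw [← pow_add, ← two_mul, pow_mul]; simp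
  simp only [pow_add, pow_one]
  linear_combination (-((-1 : R) ^ #S * (-1) ^ pairCount r S + 2 * (-1) ^ pairCount r S)) * hsq

end Powerset

def blockFactor (j : ℕ) : ℤ := ∑ T ∈ (range j).powerset, (-1) ^ (#T).choose 2

lemma sum_powerset_neg_one_pow_choose_two {α : Type*} (s : Finset α) :
    ∑ T ∈ s.powerset, (-1 : ℤ) ^ (#T).choose 2 = blockFactor #s := by
  rw [blockFactor, sum_powerset_apply_card (fun m => (-1 : ℤ) ^ m.choose 2),
    sum_powerset_apply_card (fun m => (-1 : ℤ) ^ m.choose 2), card_range]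

lemma blockFactor_one : blockFactor 1 = 2 := by decide
lemma blockFactor_two : blockFactor 2 = 2 := by decide
lemma blockFactor_four : blockFactor 4 = -4 := by decide
lemma blockFactor_five : blockFactor 5 = -8 := by decide

lemma two_mul_card_filter_eq_one {V : Type*} [Fintype V] (Q : V → ZMod 2) :
    2 * (#{v | Q v = 1} : ℤ) = Fintype.card V - ∑ v, (-1 : ℤ) ^ (Q v).val := by
  have hsign : ∀ v, (-1 : ℤ) ^ (Q v).val = 1 - 2 * if Q v = 1 then 1 else 0 := fun v => by
    generalize Q v = x
    fin_cases x <;> rfl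
  simp only [hsign, sum_sub_distrib, ← mul_sum, sum_boole, sum_const, card_univ, nsmul_eq_mul,
    mul_one]
  ring

lemma neg_one_pow_val_natCast (m : ℕ) : (-1 : ℤ) ^ ((m : ZMod 2).val) = (-1) ^ m := by
  rw [ZMod.val_natCast, ← neg_one_pow_eq_pow_mod_two]

lemma sum_fun_zmod_two {α M : Type*} [Fintype α] [DecidableEq α] [AddCommMonoid M]
    (F : (α → ZMod 2) → M) : ∑ v, F v = ∑ S : Finset α, F fun a => if a ∈ S then 1 else 0 := by
  refine (Fintype.sum_bijective (fun (S : Finset α) a => if a ∈ S then (1 : ZMod 2) else 0)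
    ⟨fun S T hST => ?_, fun v => ⟨({a | v a = 1} : Finset α), ?_⟩⟩ _ _ fun _ => rfl).symm
  · ext a
    have := congrFun hST a
    simp only at this
    split_ifs at this <;> simp_all
  · funext a
    simp only [mem_filter, mem_univ, true_and]
    generalize v a = x
    fin_cases x <;> rfl

@[to_additive]
lemma Finset.prod_comp_of_mapsTo {ι κ M : Type*} [CommMonoid M] [DecidableEq κ] {s : Finset ι}
    {t : Finset κ} {d : ι → κ} (h : ∀ i ∈ s, d i ∈ t) (g : κ → M) :
    ∏ i ∈ s, g (d i) = ∏ j ∈ t, g j ^ #{i ∈ s | d i = j} := by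
  rw [← prod_fiberwise_of_maps_to' h]
  simp only [prod_const]

lemma exists_mem_Ico_of_mem_Ico {α : Type*} [LinearOrder α] {k : ℕ → α} {ℓ : ℕ} {m : α}
    (hm : m ∈ Set.Ico (k 0) (k ℓ)) : ∃ i < ℓ, m ∈ Set.Ico (k i) (k (i + 1)) := by
  induction ℓ with
  | zero => exact absurd hm.2 (not_lt.2 hm.1)
  | succ ℓ ih =>
    by_cases hmℓ : m < k ℓ
    · obtain ⟨i, hi, hmi⟩ := ih ⟨hm.1, hmℓ⟩
      exact ⟨i, by omega, hmi⟩
    · exact ⟨ℓ, by omega, not_lt.1 hmℓ, hm.2⟩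

lemma card_filter_val_mem {α : Type*} [Fintype α] {n : ℕ} (e : α ≃ Fin n) {I : Finset ℕ}
    (hI : ∀ m ∈ I, m < n) : #{a | (e a : ℕ) ∈ I} = #I := by
  refine card_bij (fun a _ => e a) (fun a ha => (mem_filter.1 ha).2)
    (fun a _ b _ hab => e.injective (Fin.ext hab)) fun m hm => ?_
  exact ⟨e.symm ⟨m, hI m hm⟩, by simpa using hm, by simp⟩

def Inverted (P : RPair A) (a b : A) : Prop := P.p 0 a < P.p 0 b ∧ P.p 1 b < P.p 1 a

instance (P : RPair A) : DecidableRel (Inverted P) := fun _ _ => instDecidableAnd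

section Inversions

variable {P : RPair A} {a b : A}

lemma Inverted.not_symm (h : Inverted P a b) : ¬ Inverted P b a := fun h' => lt_asymm h.1 h'.1

lemma QF_indicator [DecidableEq A] (S : Finset A) :
    QF P (fun a => if a ∈ S then 1 else 0) = (#S + pairCount (Inverted P) S : ℕ) := by
  have hcross : ∀ a b, (if P.p 0 a < P.p 0 b then
      Lcoef P a b * (if a ∈ S then 1 else 0) * (if b ∈ S then 1 else 0) else 0) =
      if a ∈ S then (if b ∈ S then (if Inverted P a b then 1 else 0) else 0) else 0 := by
    intro a b
    by_cases h : P.p 0 a < P.p 0 b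
    · simp only [Lcoef, Inverted, h, lt_asymm h, true_and, false_and, or_false, if_true]
      split_ifs <;> simp
    · simp [h, Inverted]
  simp only [QF, hcross]
  simp only [sum_ite_mem, univ_inter, mul_ite, mul_one, mul_zero, sum_boole, pairCount]
  push_cast
  simp

lemma StandardPair.inverted_of_row0_eq_zero (hP : StandardPair P) (ha : (P.p 0 a : ℕ) = 0)
    (hb : b ≠ a) : Inverted P a b := by
  have ha1 := hP.1 a ha
  have h0 : (P.p 0 b : ℕ) ≠ P.p 0 a := fun h => hb ((P.p 0).injective (Fin.ext h))
  have h1 : (P.p 1 b : ℕ) ≠ P.p 1 a := fun h => hb ((P.p 1).injective (Fin.ext h))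
  have := (P.p 1 b).isLt
  constructor <;> rw [Fin.lt_def] <;> omega

lemma StandardPair.inverted_of_row1_eq_zero (hP : StandardPair P) (hz : (P.p 1 b : ℕ) = 0)
    (ha : a ≠ b) : Inverted P a b := by
  have hb0 := hP.2 b hz
  have h0 : (P.p 0 a : ℕ) ≠ P.p 0 b := fun h => ha ((P.p 0).injective (Fin.ext h))
  have h1 : (P.p 1 a : ℕ) ≠ P.p 1 b := fun h => ha ((P.p 1).injective (Fin.ext h))
  have := (P.p 0 a).isLt
  constructor <;> rw [Fin.lt_def] <;> omega

end Inversions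

structure PiecewiseOrderReversing (P : RPair A) (ℓ : ℕ) (k : ℕ → ℕ) : Prop where
  standard : StandardPair P
  k_zero : k 0 = 1
  k_last : k ℓ = Fintype.card A - 1
  k_lt_succ : ∀ i < ℓ, k i < k (i + 1)
  blocks : ∀ i < ℓ,
    (∀ b : A, (k i ≤ ((P.p 0) b).val ∧ ((P.p 0) b).val < k (i + 1)) ↔
              (k i ≤ ((P.p 1) b).val ∧ ((P.p 1) b).val < k (i + 1))) ∧
    (∀ b : A, k i ≤ ((P.p 0) b).val → ((P.p 0) b).val < k (i + 1) →
              ((P.p 0) b).val + ((P.p 1) b).val = k i + k (i + 1) - 1)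

def block (P : RPair A) (k : ℕ → ℕ) (i : ℕ) : Finset A :=
  {a | (P.p 0 a : ℕ) ∈ Ico (k i) (k (i + 1))}

namespace PiecewiseOrderReversing

variable {P : RPair A} {ℓ : ℕ} {k : ℕ → ℕ} {i j : ℕ} {a b : A}

lemma k_mono (h : PiecewiseOrderReversing P ℓ k) (hij : i ≤ j) (hj : j ≤ ℓ) : k i ≤ k j :=
  (strictMonoOn_Iic_of_lt_succ h.k_lt_succ).monotoneOn (Set.mem_Iic.2 (hij.trans hj))
    (Set.mem_Iic.2 hj) hij

lemma two_le_card (h : PiecewiseOrderReversing P ℓ k) : 2 ≤ Fintype.card A := by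
  have := h.k_mono (Nat.zero_le ℓ) le_rfl
  rw [h.k_zero, h.k_last] at this
  omega

lemma row1_mem_Ico (h : PiecewiseOrderReversing P ℓ k) (hi : i < ℓ) (ha : a ∈ block P k i) :
    k i ≤ (P.p 1 a : ℕ) ∧ (P.p 1 a : ℕ) < k (i + 1) := by
  simp only [block, mem_filter, mem_univ, true_and, mem_Ico] at ha
  exact ((h.blocks i hi).1 a).1 ha

lemma inverted_iff_of_mem_block (h : PiecewiseOrderReversing P ℓ k) (hi : i < ℓ)
    (ha : a ∈ block P k i) (hb : b ∈ block P k i) : Inverted P a b ↔ P.p 0 a < P.p 0 b := by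
  simp only [block, mem_filter, mem_univ, true_and, mem_Ico] at ha hb
  have hsa := (h.blocks i hi).2 a ha.1 ha.2
  have hsb := (h.blocks i hi).2 b hb.1 hb.2
  simp only [Inverted, Fin.lt_def]
  omega

lemma not_inverted_of_mem_block_of_ne (h : PiecewiseOrderReversing P ℓ k) (hi : i < ℓ)
    (hj : j < ℓ) (hij : i ≠ j) (ha : a ∈ block P k i) (hb : b ∈ block P k j) :
    ¬ Inverted P a b := by
  have ha1 := h.row1_mem_Ico hi ha
  have hb1 := h.row1_mem_Ico hj hb
  simp only [block, mem_filter, mem_univ, true_and, mem_Ico] at ha hb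
  simp only [Inverted, Fin.lt_def]
  rcases lt_or_gt_of_ne hij with hlt | hlt
  · have : k (i + 1) ≤ k j := h.k_mono hlt hj.le
    omega
  · have : k (j + 1) ≤ k i := h.k_mono hlt hi.le
    omega

lemma pairwiseDisjoint_block (h : PiecewiseOrderReversing P ℓ k) :
    ((range ℓ : Finset ℕ) : Set ℕ).PairwiseDisjoint (block P k) := by
  intro i hi j hj hij
  simp only [coe_range, Set.mem_Iio] at hi hj
  refine disjoint_filter.2 fun a _ hai haj => ?_
  rw [mem_Ico] at hai haj
  rcases lt_or_gt_of_ne hij with hlt | hlt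
  · have : k (i + 1) ≤ k j := h.k_mono hlt hj.le
    omega
  · have : k (j + 1) ≤ k i := h.k_mono hlt hi.le
    omega

lemma card_block (h : PiecewiseOrderReversing P ℓ k) (hi : i < ℓ) :
    #(block P k i) = k (i + 1) - k i := by
  have hk : k (i + 1) ≤ k ℓ := h.k_mono hi le_rfl
  have := h.k_last
  rw [block, card_filter_val_mem (P.p 0) fun m hm => by rw [mem_Ico] at hm; omega, Nat.card_Ico]

section Ends

variable [DecidableEq A] {a z : A}

lemma notMem_biUnion_of_row0_eq_zero (h : PiecewiseOrderReversing P ℓ k)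
    (ha : (P.p 0 a : ℕ) = 0) : a ∉ (range ℓ).biUnion (block P k) := by
  simp only [mem_biUnion, mem_range, block, mem_filter, mem_univ, true_and, mem_Ico, not_exists,
    not_and]
  intro i hi
  have := h.k_mono (Nat.zero_le i) hi.le
  rw [h.k_zero] at this
  omega

lemma notMem_biUnion_of_row1_eq_zero (h : PiecewiseOrderReversing P ℓ k)
    (hz : (P.p 1 z : ℕ) = 0) : z ∉ (range ℓ).biUnion (block P k) := by
  have hz0 := h.standard.2 z hz
  simp only [mem_biUnion, mem_range, block, mem_filter, mem_univ, true_and, mem_Ico, not_exists,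
    not_and]
  intro i hi _
  have : k (i + 1) ≤ k ℓ := h.k_mono hi le_rfl
  rw [h.k_last] at this
  omega

lemma univ_eq_insert_insert (h : PiecewiseOrderReversing P ℓ k) (ha : (P.p 0 a : ℕ) = 0)
    (hz : (P.p 1 z : ℕ) = 0) :
    (univ : Finset A) = insert a (insert z ((range ℓ).biUnion (block P k))) := by
  have hz0 := h.standard.2 z hz
  refine (eq_univ_of_forall fun b => ?_).symm
  simp only [mem_insert, mem_biUnion, mem_range, block, mem_filter, mem_univ, true_and, mem_Ico]
  by_cases hb0 : (P.p 0 b : ℕ) = 0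
  · exact Or.inl ((P.p 0).injective (Fin.ext (hb0.trans ha.symm)))
  by_cases hbn : (P.p 0 b : ℕ) = Fintype.card A - 1
  · exact Or.inr (Or.inl ((P.p 0).injective (Fin.ext (hbn.trans hz0.symm))))
  have := (P.p 0 b).isLt
  exact Or.inr (Or.inr (exists_mem_Ico_of_mem_Ico ⟨by rw [h.k_zero]; omega,
    by rw [h.k_last]; omega⟩))

lemma exists_ends (h : PiecewiseOrderReversing P ℓ k) :
    ∃ a z, (P.p 0 a : ℕ) = 0 ∧ (P.p 1 z : ℕ) = 0 ∧
      a ∉ insert z ((range ℓ).biUnion (block P k)) ∧ z ∉ (range ℓ).biUnion (block P k) := by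
  have hn := h.two_le_card
  obtain ⟨a, ha⟩ := (P.p 0).surjective ⟨0, by omega⟩
  obtain ⟨z, hz⟩ := (P.p 1).surjective ⟨0, by omega⟩
  have ha0 : (P.p 0 a : ℕ) = 0 := by rw [ha]
  have hz0 : (P.p 1 z : ℕ) = 0 := by rw [hz]
  have haz : a ≠ z := by
    rintro rfl
    have := h.standard.2 a hz0
    omega
  exact ⟨a, z, ha0, hz0, by simp [haz, h.notMem_biUnion_of_row0_eq_zero ha0],
    h.notMem_biUnion_of_row1_eq_zero hz0⟩

lemma card_eq_sum_add_two (h : PiecewiseOrderReversing P ℓ k) :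
    Fintype.card A = ∑ i ∈ range ℓ, (k (i + 1) - k i) + 2 := by
  obtain ⟨a, z, ha, hz, ha', hz'⟩ := h.exists_ends
  rw [← card_univ, h.univ_eq_insert_insert ha hz, card_insert_of_notMem ha',
    card_insert_of_notMem hz', card_biUnion h.pairwiseDisjoint_block]
  exact congrArg (· + 2) (sum_congr rfl fun i hi => h.card_block (mem_range.1 hi))

lemma sum_neg_one_pow_QF (h : PiecewiseOrderReversing P ℓ k) :
    ∑ v, (-1 : ℤ) ^ (QF P v).val =
      -2 * ∏ i ∈ range ℓ, ∑ T ∈ (block P k i).powerset, (-1 : ℤ) ^ (#T).choose 2 := by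
  obtain ⟨a, z, ha, hz, ha', hz'⟩ := h.exists_ends
  rw [sum_fun_zmod_two]
  simp only [QF_indicator, neg_one_pow_val_natCast]
  rw [← powerset_univ, h.univ_eq_insert_insert ha hz,
    sum_powerset_insert_insert_neg_one_pow (r := Inverted P) (fun _ _ => Inverted.not_symm) ha' hz'
      (fun b hb => Or.inl (h.standard.inverted_of_row0_eq_zero ha (ne_of_mem_of_not_mem hb ha')))
      (fun b hb => Or.inr (h.standard.inverted_of_row1_eq_zero hz (ne_of_mem_of_not_mem hb hz'))),
    sum_powerset_biUnion_pow h.pairwiseDisjoint_block fun i hi j hj hij a ha b hb =>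
      h.not_inverted_of_mem_block_of_ne (mem_range.1 hi) (mem_range.1 hj) hij ha hb]
  congr 1
  refine prod_congr rfl fun i hi => sum_congr rfl fun T hT => ?_
  rw [mem_powerset] at hT
  rw [pairCount_congr fun a ha b hb =>
      h.inverted_iff_of_mem_block (mem_range.1 hi) (hT ha) (hT hb),
    pairCount_lt_of_injOn (P.p 0).injective.injOn]

end Ends

end PiecewiseOrderReversing

/-- For a piece-wise order reversing pair composed of `N1` 1-blocks, `N2`
2-blocks, `N4` 4-blocks and `N5` 5-blocks (and no other blocks),
`Arf(p) = 2^(N1+2N2+4N4+5N5+1) + (-1)^(N4+N5) 2^(N1+N2+2N4+3N5)`. -/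
theorem arf_block_count
    {A : Type*} [Fintype A] [DecidableEq A] (P : RPair A)
    (hStd : StandardPair P)
    (N1 N2 N4 N5 : ℕ) (ℓ : ℕ) (k : ℕ → ℕ)
    (hk0 : k 0 = 1) (hkl : k ℓ = Fintype.card A - 1)
    (hmono : ∀ i < ℓ, k i < k (i + 1))
    (hblocks : ∀ i < ℓ,
      (∀ b : A, (k i ≤ ((P.p 0) b).val ∧ ((P.p 0) b).val < k (i + 1)) ↔
                (k i ≤ ((P.p 1) b).val ∧ ((P.p 1) b).val < k (i + 1))) ∧
      (∀ b : A, k i ≤ ((P.p 0) b).val → ((P.p 0) b).val < k (i + 1) →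
                ((P.p 0) b).val + ((P.p 1) b).val = k i + k (i + 1) - 1))
    (hsizes : ∀ i < ℓ, k (i + 1) - k i = 1 ∨ k (i + 1) - k i = 2 ∨
                       k (i + 1) - k i = 4 ∨ k (i + 1) - k i = 5)
    (hN1 : ((Finset.range ℓ).filter (fun i => k (i + 1) - k i = 1)).card = N1)
    (hN2 : ((Finset.range ℓ).filter (fun i => k (i + 1) - k i = 2)).card = N2)
    (hN4 : ((Finset.range ℓ).filter (fun i => k (i + 1) - k i = 4)).card = N4)
    (hN5 : ((Finset.range ℓ).filter (fun i => k (i + 1) - k i = 5)).card = N5) :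
    (Arf P : ℤ) = 2 ^ (N1 + 2 * N2 + 4 * N4 + 5 * N5 + 1) +
      (-1 : ℤ) ^ (N4 + N5) * 2 ^ (N1 + N2 + 2 * N4 + 3 * N5) := by
  have h : PiecewiseOrderReversing P ℓ k := ⟨hStd, hk0, hkl, hmono, hblocks⟩
  have hsizes_mem : ∀ i ∈ range ℓ, k (i + 1) - k i ∈ ({1, 2, 4, 5} : Finset ℕ) := by
    simpa using hsizes
  have hW : ∑ v, (-1 : ℤ) ^ (QF P v).val = -2 * (2 ^ N1 * 2 ^ N2 * (-4) ^ N4 * (-8) ^ N5) := by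
    rw [h.sum_neg_one_pow_QF, prod_congr rfl fun i hi => by
      rw [sum_powerset_neg_one_pow_choose_two, h.card_block (mem_range.1 hi)],
      prod_comp_of_mapsTo hsizes_mem blockFactor]
    simp [hN1, hN2, hN4, hN5, blockFactor_one, blockFactor_two, blockFactor_four,
      blockFactor_five, mul_assoc]
  have hn : Fintype.card A = N1 + 2 * N2 + 4 * N4 + 5 * N5 + 2 := by
    rw [h.card_eq_sum_add_two, sum_comp_of_mapsTo hsizes_mem fun j => j]
    simp [hN1, hN2, hN4, hN5, mul_comm, add_assoc]
  have hsign : (2 : ℤ) ^ N1 * 2 ^ N2 * (-4) ^ N4 * (-8) ^ N5 =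
      (-1) ^ (N4 + N5) * 2 ^ (N1 + N2 + 2 * N4 + 3 * N5) := by
    rw [show (-4 : ℤ) = -1 * 2 ^ 2 by norm_num, show (-8 : ℤ) = -1 * 2 ^ 3 by norm_num,
      mul_pow, mul_pow, ← pow_mul, ← pow_mul]
    ring
  have hArf := two_mul_card_filter_eq_one (QF P)
  rw [hW, hsign, Fintype.card_fun, ZMod.card, hn] at hArf
  apply mul_left_cancel₀ (two_ne_zero : (2 : ℤ) ≠ 0)
  rw [Arf]
  push_cast at hArf
  linear_combination hArf
end

section
/- Let Σ ⊂ Std(A) be the set of standard pairs of the form: top row a, w_0, w_1, w_2, ..., w_d, w_{d+1}, z and bottom row z, w_0, w_d, w_{d-1}, ..., w_1, w_{d+1}, a, where w_0 and w_{d+1} are possibly empty words and w_1,...,w_d are non-empty words (so the block of words w_1⋯w_d appears in reversed word-order in the bottom row while w_0 and w_{d+1} appear identically). Then Σ is closed under all inner and outer switch moves. -/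
variable {A : Type*} [Fintype A]

/-- The row `ε` of a pair, as the list of its letters in order. -/
def rowList {A : Type*} [Fintype A] (P : RPair A) (ε : Fin 2) : List A :=
  List.ofFn (fun i : Fin (Fintype.card A) => (P.p ε).symm i)

/-- An inner `{b,c}`-switch: transforms a standard pair of shape
`[a w1 b w2 c w3 z / z w4 b w5 c w6 a]` into `[a w2 c w1 b w3 z / z w5 c w4 b w6 a]`. -/
def InnerSwitch {A : Type*} [Fintype A] (P Q : RPair A) : Prop :=
  ∃ (a z b c : A) (w1 w2 w3 w4 w5 w6 : List A),
    rowList P 0 = a :: (w1 ++ [b] ++ w2 ++ [c] ++ w3 ++ [z]) ∧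
    rowList P 1 = z :: (w4 ++ [b] ++ w5 ++ [c] ++ w6 ++ [a]) ∧
    rowList Q 0 = a :: (w2 ++ [c] ++ w1 ++ [b] ++ w3 ++ [z]) ∧
    rowList Q 1 = z :: (w5 ++ [c] ++ w4 ++ [b] ++ w6 ++ [a])

/-- An outer switch: transforms a standard pair `[a w1 b w2 z / z w3 b w4 a]`
into either `[b w2 a w1 z / z w4 a w3 b]` (`{a,b}`-switch)
or `[a w2 z w1 b / b w4 z w3 a]` (`{b,z}`-switch). -/
def OuterSwitch {A : Type*} [Fintype A] (P Q : RPair A) : Prop :=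
  ∃ (a z b : A) (w1 w2 w3 w4 : List A),
    rowList P 0 = a :: (w1 ++ [b] ++ w2 ++ [z]) ∧
    rowList P 1 = z :: (w3 ++ [b] ++ w4 ++ [a]) ∧
    ((rowList Q 0 = b :: (w2 ++ [a] ++ w1 ++ [z]) ∧
      rowList Q 1 = z :: (w4 ++ [a] ++ w3 ++ [b])) ∨
     (rowList Q 0 = a :: (w2 ++ [z] ++ w1 ++ [b]) ∧
      rowList Q 1 = b :: (w4 ++ [z] ++ w3 ++ [a])))

/-- Membership in `Σ`: the standard pairs of shape
`[a w0 w1 w2 ⋯ wd w_{d+1} z / z w0 wd w_{d-1} ⋯ w1 w_{d+1} a]` with `w0`,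
`w_{d+1}` possibly empty and `w1,…,wd` non-empty. -/
def InSigma {A : Type*} [Fintype A] (P : RPair A) : Prop :=
  ∃ (a z : A) (w0 wlast : List A) (d : ℕ) (w : ℕ → List A),
    1 ≤ d ∧
    (∀ i : ℕ, 1 ≤ i → i ≤ d → w i ≠ []) ∧
    rowList P 0 = a :: (w0 ++ ((List.range d).map (fun i => w (i + 1))).flatten
      ++ wlast ++ [z]) ∧
    rowList P 1 = z :: (w0 ++ ((List.range d).map (fun i => w (d - i))).flatten
      ++ wlast ++ [a])

/-!
Write a pair of `Σ` as `[a S z / z S' a]`; then `S'` is `S` with the order of the blocks of a middle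
segment reversed. A switch cuts both cores `S`, `S'` at the same letters and reglues the pieces.
Locating each cut letter in the common prefix, inside a block, or in the common suffix of that
segment, one reads off a new block decomposition of the switched cores: a block containing a cut
letter is split there, and the moved words join the prefix, the suffix, or one new block.
-/

namespace List

variable {α : Type*}

theorem Nodup.append_cons_inj {l u v u' v' : List α} {b : α} (hl : l.Nodup)
    (h : l = u ++ b :: v) (h' : l = u' ++ b :: v') : u = u' ∧ v = v' := by
  subst h
  have hb : b ∉ u ++ v := (nodup_cons.mp (nodup_middle.mp hl)).1
  obtain ⟨hu, -, hv⟩ := (append_cons_inj_of_notMem (fun h => hb (mem_append_left _ h))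
    (fun h => hb (mem_append_right _ h))).mp h'
  exact ⟨hu, hv⟩

theorem cons_append_singleton_inj {a a' z z' : α} {S T : List α} :
    a :: (S ++ [z]) = a' :: (T ++ [z']) ↔ a = a' ∧ S = T ∧ z = z' := by
  rw [cons.injEq, append_singleton_inj]

theorem map_range_sub_eq_reverse (d : ℕ) (w : ℕ → α) :
    (range d).map (fun i => w (d - i)) = ((range d).map (fun i => w (i + 1))).reverse := by
  refine ext_getElem (by simp) fun i h _ => ?_
  simp only [getElem_map, getElem_range, getElem_reverse, length_map, length_range]
  congr 1
  simp only [length_map, length_range] at h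
  omega

theorem map_getD_range (W : List α) (x : α) : (range W.length).map (W.getD · x) = W := by
  refine ext_getElem (by simp) fun i h _ => ?_
  simp only [getElem_map, getElem_range]
  exact getD_eq_getElem _ _ (by simpa using h)

/-- Unlike in `Σ`, blocks may be empty and there may be none (see `exists_blocks_ne_nil`). -/
def IsBlockReversal (S S' : List α) : Prop :=
  ∃ (w₀ w₁ : List α) (W : List (List α)),
    S = w₀ ++ W.flatten ++ w₁ ∧ S' = w₀ ++ W.reverse.flatten ++ w₁

namespace IsBlockReversal

theorem perm {S S' : List α} (h : IsBlockReversal S S') : S.Perm S' := by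
  obtain ⟨w₀, w₁, W, rfl, rfl⟩ := h
  exact ((W.reverse_perm.symm.flatten).append_left w₀).append_right w₁

theorem split_cases {w₀ w₁ u v u' v' : List α} {W : List (List α)} {b : α}
    (hnd : (w₀ ++ W.flatten ++ w₁).Nodup)
    (hu : w₀ ++ W.flatten ++ w₁ = u ++ b :: v)
    (hu' : w₀ ++ W.reverse.flatten ++ w₁ = u' ++ b :: v') :
    (∃ m, w₀ = u ++ b :: m ∧ v = m ++ W.flatten ++ w₁ ∧
      u = u' ∧ v' = m ++ W.reverse.flatten ++ w₁) ∨
    (∃ U p q V, W = U ++ (p ++ b :: q) :: V ∧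
      u = w₀ ++ U.flatten ++ p ∧ v = q ++ V.flatten ++ w₁ ∧
      u' = w₀ ++ V.reverse.flatten ++ p ∧ v' = q ++ U.reverse.flatten ++ w₁) ∨
    (∃ p, w₁ = p ++ b :: v ∧ u = w₀ ++ W.flatten ++ p ∧
      u' = w₀ ++ W.reverse.flatten ++ p ∧ v = v') := by
  have hnd' : (w₀ ++ W.reverse.flatten ++ w₁).Nodup :=
    (IsBlockReversal.perm ⟨w₀, w₁, W, rfl, rfl⟩).nodup_iff.mp hnd
  have hb : b ∈ w₀ ++ W.flatten ++ w₁ := hu ▸ mem_append_right _ mem_cons_self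
  simp only [mem_append, mem_flatten] at hb
  rcases hb with (hb | ⟨l, hlW, hbl⟩) | hb
  · obtain ⟨p, m, rfl⟩ := append_of_mem hb
    obtain ⟨rfl, rfl⟩ := hnd.append_cons_inj (u := p) (v := m ++ W.flatten ++ w₁) (by simp) hu
    obtain ⟨rfl, rfl⟩ :=
      hnd'.append_cons_inj (u := p) (v := m ++ W.reverse.flatten ++ w₁) (by simp) hu'
    exact Or.inl ⟨m, rfl, rfl, rfl, rfl⟩
  · obtain ⟨U, V, rfl⟩ := append_of_mem hlW
    obtain ⟨p, q, rfl⟩ := append_of_mem hbl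
    obtain ⟨rfl, rfl⟩ := hnd.append_cons_inj (u := w₀ ++ U.flatten ++ p)
      (v := q ++ V.flatten ++ w₁) (by simp) hu
    obtain ⟨rfl, rfl⟩ := hnd'.append_cons_inj (u := w₀ ++ V.reverse.flatten ++ p)
      (v := q ++ U.reverse.flatten ++ w₁) (by simp) hu'
    exact Or.inr (Or.inl ⟨U, p, q, V, rfl, rfl, rfl, rfl, rfl⟩)
  · obtain ⟨p, m, rfl⟩ := append_of_mem hb
    obtain ⟨rfl, rfl⟩ := hnd.append_cons_inj (u := w₀ ++ W.flatten ++ p) (v := m) (by simp) hu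
    obtain ⟨rfl, rfl⟩ :=
      hnd'.append_cons_inj (u := w₀ ++ W.reverse.flatten ++ p) (v := m) (by simp) hu'
    exact Or.inr (Or.inr ⟨p, rfl, rfl, rfl, rfl⟩)

variable {S S' u v u' v' : List α}

theorem rotate (h : IsBlockReversal S S') (hnd : S.Nodup) {b : α}
    (hu : S = u ++ b :: v) (hu' : S' = u' ++ b :: v') (x : α) :
    IsBlockReversal (v ++ x :: u) (v' ++ x :: u') := by
  obtain ⟨w₀, w₁, W, rfl, rfl⟩ := h
  rcases split_cases hnd hu hu' with ⟨m, rfl, rfl, rfl, rfl⟩ |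
    ⟨U, p, q, V, rfl, rfl, rfl, rfl, rfl⟩ | ⟨p, rfl, rfl, rfl, rfl⟩
  · exact ⟨m, w₁ ++ x :: u, W, by simp, by simp⟩
  · exact ⟨q, p, V ++ (w₁ ++ x :: w₀) :: U, by simp, by simp⟩
  · exact ⟨v ++ x :: w₀, p, W, by simp, by simp⟩

theorem insert_after (h : IsBlockReversal S S') (hnd : S.Nodup) {c : α}
    (hu : S = u ++ c :: v) (hu' : S' = u' ++ c :: v') (t : List α) :
    IsBlockReversal (u ++ c :: (t ++ v)) (u' ++ c :: (t ++ v')) := by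
  obtain ⟨w₀, w₁, W, rfl, rfl⟩ := h
  rcases split_cases hnd hu hu' with ⟨m, rfl, rfl, rfl, rfl⟩ |
    ⟨U, p, q, V, rfl, rfl, rfl, rfl, rfl⟩ | ⟨p, rfl, rfl, rfl, rfl⟩
  · exact ⟨u ++ c :: (t ++ m), w₁, W, by simp, by simp⟩
  · exact ⟨w₀, w₁, U ++ (p ++ c :: (t ++ q)) :: V, by simp, by simp⟩
  · exact ⟨w₀, p ++ c :: (t ++ v), W, by simp, by simp⟩

theorem switch (h : IsBlockReversal S S') (hnd : S.Nodup) {b c : α}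
    {u₁ u₂ u₃ u₄ u₅ u₆ : List α}
    (hu : S = u₁ ++ b :: (u₂ ++ c :: u₃)) (hu' : S' = u₄ ++ b :: (u₅ ++ c :: u₆)) :
    IsBlockReversal (u₂ ++ c :: (u₁ ++ b :: u₃)) (u₅ ++ c :: (u₄ ++ b :: u₆)) := by
  have hnd' : S'.Nodup := h.perm.nodup_iff.mp hnd
  have hv : (u₂ ++ c :: u₃).Nodup := (hu ▸ hnd).of_append_right.of_cons
  have hv' : (u₅ ++ c :: u₆).Nodup := (hu' ▸ hnd').of_append_right.of_cons
  obtain ⟨w₀, w₁, W, rfl, rfl⟩ := h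
  rcases split_cases hnd hu hu' with ⟨m, rfl, hm, rfl, hm'⟩ |
    ⟨U, p, q, V, rfl, rfl, hq, rfl, hq'⟩ | ⟨p, rfl, rfl, rfl, hpv⟩
  -- the tails after `b` are again a block reversal, and the switch inserts `u₁ ++ [b]` after `c`
  · simpa using IsBlockReversal.insert_after ⟨m, w₁, W, rfl, rfl⟩ (hm ▸ hv) hm.symm hm'.symm
      (u₁ ++ [b])
  -- in the bottom row the blocks of `V` precede `b`, while `c` follows it
  · have hcV : c ∉ V.flatten := by
      intro hc
      rw [hu'] at hnd'
      refine disjoint_of_nodup_append hnd' (a := c) ?_ (by simp)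
      simp only [mem_append, mem_flatten, mem_reverse] at hc ⊢
      exact Or.inl (Or.inr hc)
    have hc : c ∈ q ∨ c ∈ w₁ := by
      have hc := hq ▸ mem_append_right u₂ mem_cons_self
      simp only [mem_append] at hc
      tauto
    rcases hc with hc | hc
    · obtain ⟨r, s, rfl⟩ := append_of_mem hc
      obtain ⟨rfl, rfl⟩ := hv.append_cons_inj (u' := r) (v' := s ++ V.flatten ++ w₁) rfl
        (hq.trans (by simp))
      obtain ⟨rfl, rfl⟩ := hv'.append_cons_inj (u' := u₂) (v' := s ++ U.reverse.flatten ++ w₁) rfl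
        (hq'.trans (by simp))
      exact ⟨u₅ ++ c :: w₀, w₁, U ++ (p ++ b :: s) :: V, by simp, by simp⟩
    · obtain ⟨r, s, rfl⟩ := append_of_mem hc
      obtain ⟨rfl, rfl⟩ := hv.append_cons_inj (u' := q ++ V.flatten ++ r) (v' := s) rfl
        (hq.trans (by simp))
      obtain ⟨rfl, rfl⟩ := hv'.append_cons_inj (u' := q ++ U.reverse.flatten ++ r) (v' := u₃) rfl
        (hq'.trans (by simp))
      exact ⟨q, p ++ b :: u₆, V ++ (r ++ c :: w₀) :: U, by simp, by simp⟩
  · obtain ⟨rfl, rfl⟩ := hv.append_cons_inj rfl hpv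
    exact ⟨u₂ ++ c :: w₀, p ++ b :: u₃, W, by simp, by simp⟩

theorem exists_blocks_ne_nil (h : IsBlockReversal S S') (hS : S ≠ []) :
    ∃ (w₀ w₁ : List α) (W : List (List α)), W ≠ [] ∧ (∀ v ∈ W, v ≠ []) ∧
      S = w₀ ++ W.flatten ++ w₁ ∧ S' = w₀ ++ W.reverse.flatten ++ w₁ := by
  obtain ⟨w₀, w₁, W, rfl, rfl⟩ := h
  by_cases hW : W.filter (!·.isEmpty) = []
  · have hflat : W.flatten = [] := by rw [← flatten_filter_not_isEmpty, hW, flatten_nil]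
    have hflat' : W.reverse.flatten = [] := by simpa using hflat
    obtain ⟨x, r, hxr⟩ := ne_nil_iff_exists_cons.mp hS
    rw [hflat, append_nil] at hxr
    exact ⟨[], r, [[x]], by simp, by simp, by simp [hflat, hxr], by simp [hflat', hxr]⟩
  · refine ⟨w₀, w₁, W.filter (!·.isEmpty), hW, by simp, by rw [flatten_filter_not_isEmpty], ?_⟩
    rw [← filter_reverse, flatten_filter_not_isEmpty]

end IsBlockReversal

end List

theorem rowList_nodup (P : RPair A) (ε : Fin 2) : (rowList P ε).Nodup :=
  List.nodup_ofFn.mpr (P.p ε).symm.injective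

theorem InSigma.exists_isBlockReversal {P : RPair A} (hP : InSigma P) :
    ∃ (a z : A) (S S' : List A), rowList P 0 = a :: (S ++ [z]) ∧
      rowList P 1 = z :: (S' ++ [a]) ∧ S.IsBlockReversal S' := by
  obtain ⟨a, z, w₀, w₁, d, w, -, -, h₀, h₁⟩ := hP
  let W := (List.range d).map (fun i => w (i + 1))
  refine ⟨a, z, w₀ ++ W.flatten ++ w₁, w₀ ++ W.reverse.flatten ++ w₁, h₀, ?_, w₀, w₁, W, rfl, rfl⟩
  rw [h₁, List.map_range_sub_eq_reverse]

theorem inSigma_of_isBlockReversal {Q : RPair A} {a z : A}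
    {S S' : List A} (h₀ : rowList Q 0 = a :: (S ++ [z])) (h₁ : rowList Q 1 = z :: (S' ++ [a]))
    (hS : S ≠ []) (h : S.IsBlockReversal S') : InSigma Q := by
  obtain ⟨w₀, w₁, W, hW, hblocks, rfl, rfl⟩ := h.exists_blocks_ne_nil hS
  refine ⟨a, z, w₀, w₁, W.length, fun i => W.getD (i - 1) [], List.length_pos_iff.mpr hW,
    fun i hi₁ hi₂ => ?_, ?_, ?_⟩
  · show W.getD (i - 1) [] ≠ []
    rw [List.getD_eq_getElem _ _ (by omega)]
    exact hblocks _ (List.getElem_mem _)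
  · simp only [Nat.add_sub_cancel, W.map_getD_range]
    exact h₀
  · rw [List.map_range_sub_eq_reverse W.length (fun i => W.getD (i - 1) [])]
    simp only [Nat.add_sub_cancel, W.map_getD_range]
    exact h₁

section

variable {P Q : RPair A}

theorem InSigma.of_innerSwitch (hP : InSigma P) (h : InnerSwitch P Q) : InSigma Q := by
  obtain ⟨a, z, S, S', hP₀, hP₁, hB⟩ := hP.exists_isBlockReversal
  obtain ⟨a', z', b, c, w₁, w₂, w₃, w₄, w₅, w₆, h₀, h₁, hQ₀, hQ₁⟩ := h
  have hnd : S.Nodup := (hP₀ ▸ rowList_nodup P 0).of_cons.of_append_left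
  obtain ⟨rfl, hS, rfl⟩ := List.cons_append_singleton_inj.mp <| hP₀.symm.trans <|
    h₀.trans (c := a' :: ((w₁ ++ b :: (w₂ ++ c :: w₃)) ++ [z'])) (by simp)
  obtain ⟨-, hS', -⟩ := List.cons_append_singleton_inj.mp <| hP₁.symm.trans <|
    h₁.trans (c := z :: ((w₄ ++ b :: (w₅ ++ c :: w₆)) ++ [a])) (by simp)
  exact inSigma_of_isBlockReversal (a := a) (z := z) (S := w₂ ++ c :: (w₁ ++ b :: w₃))
    (S' := w₅ ++ c :: (w₄ ++ b :: w₆)) (by rw [hQ₀]; simp) (by rw [hQ₁]; simp) (by simp)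
    (hB.switch hnd hS hS')

theorem InSigma.of_outerSwitch (hP : InSigma P) (h : OuterSwitch P Q) : InSigma Q := by
  obtain ⟨a, z, S, S', hP₀, hP₁, hB⟩ := hP.exists_isBlockReversal
  obtain ⟨a', z', b, w₁, w₂, w₃, w₄, h₀, h₁, hQ⟩ := h
  have hnd : S.Nodup := (hP₀ ▸ rowList_nodup P 0).of_cons.of_append_left
  obtain ⟨rfl, hS, rfl⟩ := List.cons_append_singleton_inj.mp <| hP₀.symm.trans <|
    h₀.trans (c := a' :: ((w₁ ++ b :: w₂) ++ [z'])) (by simp)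
  obtain ⟨-, hS', -⟩ := List.cons_append_singleton_inj.mp <| hP₁.symm.trans <|
    h₁.trans (c := z :: ((w₃ ++ b :: w₄) ++ [a])) (by simp)
  rcases hQ with ⟨hQ₀, hQ₁⟩ | ⟨hQ₀, hQ₁⟩
  · exact inSigma_of_isBlockReversal (a := b) (z := z) (S := w₂ ++ a :: w₁) (S' := w₄ ++ a :: w₃)
      (by rw [hQ₀]; simp) (by rw [hQ₁]; simp) (by simp) (hB.rotate hnd hS hS' a)
  · exact inSigma_of_isBlockReversal (a := a) (z := b) (S := w₂ ++ z :: w₁) (S' := w₄ ++ z :: w₃)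
      (by rw [hQ₀]; simp) (by rw [hQ₁]; simp) (by simp) (hB.rotate hnd hS hS' z)

end

/-- The set `Σ` is closed under inner and outer switch moves. -/
theorem sigma_closed_under_switches
    {A : Type*} [Fintype A] (P Q : RPair A) (hP : InSigma P)
    (h : InnerSwitch P Q ∨ OuterSwitch P Q) :
    InSigma Q :=
  h.elim hP.of_innerSwitch hP.of_outerSwitch
end
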